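/- arXiv:1711.09596 — 18 statements merged into one kernel-verified Lean document; each statement's English description precedes it below -/
import Mathlib

section
/- Let β ∈ ℂ with |β| > 1, let E > 0, and let (b_n) be a bounded sequence of complex numbers such that |b_{n+1} - β·b_n| ≤ E for all n ∈ ℕ. Then |b_n| ≤ E/(|β|-1) for all n ∈ ℕ. -/
theorem stmt_1 (β : ℂ) (hβ : 1 < ‖β‖) (E : ℝ) (hE : 0 < E)
    (b : ℕ → ℂ) (hb : ∃ B : ℝ, ∀ n : ℕ, ‖b n‖ ≤ B)
    (h : ∀ n : ℕ, ‖b (n + 1) - β * b n‖ ≤ E) :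
    ∀ n : ℕ, ‖b n‖ ≤ E / (‖β‖ - 1) := by
  set r := ‖β‖ with hr
  set M := E / (r - 1) with hM
  have hr1 : 0 < r - 1 := by linarith
  have hrM : r * M - E = M := by
    rw [hM]
    field_simp
    ring
  by_contra hcon
  push_neg at hcon
  obtain ⟨n, hn⟩ := hcon
  set c := ‖b n‖ - M with hc
  have hcpos : 0 < c := by simpa [hc] using sub_pos.mpr hn
  have step : ∀ m : ℕ, r * ‖b m‖ - E ≤ ‖b (m + 1)‖ := by
    intro m
    have h1 : ‖β * b m‖ - ‖b (m + 1)‖ ≤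
        ‖b (m + 1) - β * b m‖ := by
      rw [norm_sub_rev]
      exact norm_sub_norm_le _ _
    have h2 := h m
    rw [norm_mul] at h1
    linarith
  have key : ∀ k : ℕ, M + r ^ k * c ≤ ‖b (n + k)‖ := by
    intro k
    induction k with
    | zero => simp [hc]
    | succ k ih =>
      have := step (n + k)
      have hrk : r * (M + r ^ k * c) ≤ r * ‖b (n + k)‖ :=
        mul_le_mul_of_nonneg_left ih (by linarith)
      have : M + r ^ (k + 1) * c ≤ ‖b (n + k + 1)‖ := by
        have : r * (M + r ^ k * c) - E = M + r ^ (k + 1) * c := by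
          rw [mul_add, pow_succ]; linarith [hrM]
        nlinarith [step (n + k)]
      exact this
  obtain ⟨B, hB⟩ := hb
  obtain ⟨k, hk⟩ := pow_unbounded_of_one_lt ((B - M) / c) hβ
  have hkc : B - M < r ^ k * c := by
    rw [div_lt_iff₀ hcpos] at hk
    linarith
  have := key k
  have := hB (n + k)
  linarith
end

section
/- Let d ≥ 1 and β₁,…,β_d ∈ ℂ with |β_j| < 1 for all j. Let E > 0 and let (a_n), (e_n) be complex sequences with |e_n| ≤ E for all n, satisfying a_{n+d} + p_{d-1}a_{n+d-1} + ⋯ + p_0 a_n = e_n for all n, where x^d + p_{d-1}x^{d-1} + ⋯ + p_0 = (x-β₁)⋯(x-β_d). Then for each ε > 0 there exists n₀ such that |a_n| < E/∏_{j=1}^d (1-|β_j|) + ε for all n ≥ n₀. In particular (|a_n|) is bounded. -/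
open Polynomial

noncomputable def shiftE : Module.End ℂ (ℕ → ℂ) where
  toFun a n := a (n + 1)
  map_add' _ _ := rfl
  map_smul' _ _ := rfl

lemma shiftE_apply (a : ℕ → ℂ) (n : ℕ) : shiftE a n = a (n + 1) := rfl

lemma shiftE_pow (k : ℕ) (a : ℕ → ℂ) (n : ℕ) : (shiftE ^ k) a n = a (n + k) := by
  induction k generalizing a n with
  | zero => rfl
  | succ k ih =>
    rw [pow_succ', Module.End.mul_apply, shiftE_apply, ih]
    ring_nf

lemma step_lemma (β : ℂ) (hβ : ‖β‖ < 1) (x y : ℕ → ℂ)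
    (M : ℝ)
    (hy : ∀ ε > (0:ℝ), ∃ n₀, ∀ n ≥ n₀, ‖y n‖ < M + ε)
    (hybd : ∃ B, ∀ n, ‖y n‖ ≤ B)
    (hrec : ∀ n, x (n+1) - β * x n = y n) :
    (∀ ε > (0:ℝ), ∃ n₀, ∀ n ≥ n₀,
      ‖x n‖ < M / (1 - ‖β‖) + ε) ∧
    ∃ B, ∀ n, ‖x n‖ ≤ B := by
  set r := ‖β‖ with hr
  clear_value r
  have hr0 : 0 ≤ r := hr ▸ norm_nonneg β
  have h1r : 0 < 1 - r := by linarith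
  have hstep : ∀ n, ‖x (n+1)‖ ≤ r * ‖x n‖ + ‖y n‖ := by
    intro n
    have hxn : x (n+1) = β * x n + y n := by linear_combination hrec n
    rw [hxn]
    calc ‖β * x n + y n‖ ≤ ‖β * x n‖ + ‖y n‖ :=
          norm_add_le _ _
      _ = r * ‖x n‖ + ‖y n‖ := by rw [norm_mul, ← hr]
  obtain ⟨B, hB⟩ := hybd
  have hB0 : 0 ≤ B := le_trans (norm_nonneg _) (hB 0)
  set C : ℝ := ‖x 0‖ + B / (1 - r) with hC
  clear_value C
  have hx0 : 0 ≤ ‖x 0‖ := norm_nonneg _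
  have hDB : B / (1 - r) * (1 - r) = B := div_mul_cancel₀ _ (ne_of_gt h1r)
  have h7 : (1 - r) * C = (1 - r) * ‖x 0‖ + B := by
    rw [hC, mul_add, mul_comm ((1:ℝ) - r) (B / (1 - r)), hDB]
  have hrCB : r * C + B ≤ C := by nlinarith [mul_nonneg (le_of_lt h1r) hx0]
  have hCbd : ∀ n, ‖x n‖ ≤ C := by
    intro n
    induction n with
    | zero =>
      have : 0 ≤ B / (1 - r) := div_nonneg hB0 (le_of_lt h1r)
      rw [hC]; linarith
    | succ n ih =>
      calc ‖x (n+1)‖ ≤ r * ‖x n‖ + ‖y n‖ := hstep n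
        _ ≤ r * C + B := by nlinarith [hB n]
        _ ≤ C := hrCB
  have hC0 : 0 ≤ C := le_trans (norm_nonneg (x 0)) (hCbd 0)
  refine ⟨?_, C, hCbd⟩
  intro ε hε
  set δ : ℝ := ε * (1 - r) / 2 with hδdef
  have hδ : 0 < δ := by rw [hδdef]; positivity
  clear_value δ
  obtain ⟨n₀, hn₀⟩ := hy δ hδ
  have hMδ : 0 < M + δ := lt_of_le_of_lt (norm_nonneg (y n₀)) (hn₀ n₀ le_rfl)
  have hDM : (M + δ) / (1 - r) * (1 - r) = M + δ := div_mul_cancel₀ _ (ne_of_gt h1r)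
  have hbound : ∀ m, ‖x (n₀ + m)‖ ≤ r ^ m * C + (M + δ) / (1 - r) := by
    intro m
    induction m with
    | zero =>
      have : 0 ≤ (M + δ) / (1 - r) := div_nonneg (le_of_lt hMδ) (le_of_lt h1r)
      simpa using le_trans (hCbd n₀) (by linarith)
    | succ m ih =>
      have h1 := hstep (n₀ + m)
      have h2 : ‖y (n₀ + m)‖ < M + δ := hn₀ _ (Nat.le_add_right _ _)
      have h3 : n₀ + (m + 1) = (n₀ + m) + 1 := by ring
      rw [h3]
      have hrm : 0 ≤ r ^ m := pow_nonneg hr0 m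
      calc ‖x (n₀ + m + 1)‖ ≤ r * ‖x (n₀ + m)‖ + ‖y (n₀ + m)‖ := h1
        _ ≤ r * (r ^ m * C + (M + δ) / (1 - r)) + (M + δ) := by
            have := mul_le_mul_of_nonneg_left ih hr0
            linarith
        _ = r ^ (m + 1) * C + (r * ((M + δ) / (1 - r)) + (M + δ)) := by ring
        _ ≤ r ^ (m + 1) * C + (M + δ) / (1 - r) := by nlinarith
  have htend : Filter.Tendsto (fun m => r ^ m * C) Filter.atTop (nhds 0) := by
    have := tendsto_pow_atTop_nhds_zero_of_lt_one hr0 hβ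
    simpa using this.mul_const C
  obtain ⟨m₁, hm₁⟩ := (htend.eventually (gt_mem_nhds (by positivity : (0:ℝ) < ε / 2))).exists
  refine ⟨n₀ + m₁, fun n hn => ?_⟩
  obtain ⟨m, rfl⟩ : ∃ m, n = n₀ + m := ⟨n - n₀, by omega⟩
  have hmm : m₁ ≤ m := by omega
  have hmono : r ^ m ≤ r ^ m₁ := pow_le_pow_of_le_one hr0 (le_of_lt hβ) hmm
  have h4 : r ^ m * C ≤ r ^ m₁ * C := mul_le_mul_of_nonneg_right hmono hC0
  have h5 : (M + δ) / (1 - r) = M / (1 - r) + δ / (1 - r) := add_div _ _ _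
  have h6 : δ / (1 - r) = ε / 2 := by
    rw [hδdef]; field_simp
  have hb := hbound m
  rw [h5, h6] at hb
  calc ‖x (n₀ + m)‖ ≤ r ^ m * C + (M / (1 - r) + ε / 2) := hb
    _ ≤ r ^ m₁ * C + M / (1 - r) + ε / 2 := by linarith
    _ < ε / 2 + M / (1 - r) + ε / 2 := by linarith
    _ = M / (1 - r) + ε := by ring

lemma key_lemma (s : Multiset ℂ) :
    ∀ (x y : ℕ → ℂ) (E : ℝ), (∀ b ∈ s, ‖b‖ < 1) →
    (∀ ε > (0:ℝ), ∃ n₀, ∀ n ≥ n₀, ‖y n‖ < E + ε) →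
    (∃ B, ∀ n, ‖y n‖ ≤ B) →
    (∀ n, (Polynomial.aeval shiftE (s.map (fun b => X - C b)).prod) x n = y n) →
    (∀ ε > (0:ℝ), ∃ n₀, ∀ n ≥ n₀,
      ‖x n‖ < E / (s.map (fun b => 1 - ‖b‖)).prod + ε) ∧
    ∃ B, ∀ n, ‖x n‖ ≤ B := by
  induction s using Multiset.induction_on with
  | empty =>
    intro x y E _ hy hybd hrec
    have hx : ∀ n, x n = y n := by
      intro n
      have h := hrec n
      simpa using h
    simp only [Multiset.map_zero, Multiset.prod_zero, div_one]
    constructor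
    · intro ε hε
      obtain ⟨n₀, hn₀⟩ := hy ε hε
      exact ⟨n₀, fun n hn => by rw [hx n]; exact hn₀ n hn⟩
    · obtain ⟨B, hB⟩ := hybd
      exact ⟨B, fun n => by rw [hx n]; exact hB n⟩
  | cons b s ih =>
    intro x y E hs hy hybd hrec
    have hb : ‖b‖ < 1 := hs b (Multiset.mem_cons_self b s)
    have hs' : ∀ c ∈ s, ‖c‖ < 1 := fun c hc => hs c (Multiset.mem_cons_of_mem hc)
    set z : ℕ → ℂ := fun n => (Polynomial.aeval shiftE (s.map (fun c => X - C c)).prod) x n with hz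
    have hzrec : ∀ n, z (n+1) - b * z n = y n := by
      intro n
      have h := hrec n
      rw [Multiset.map_cons, Multiset.prod_cons, map_mul] at h
      rw [← h]
      have : (Polynomial.aeval shiftE (X - C b)) = shiftE - b • 1 := by
        simp [map_sub, aeval_X, aeval_C, Algebra.algebraMap_eq_smul_one]
      rw [Module.End.mul_apply]
      rw [this]
      simp only [LinearMap.sub_apply, LinearMap.smul_apply, Module.End.one_apply,
        Pi.sub_apply, Pi.smul_apply, smul_eq_mul]
      rw [hz]
      rfl
    obtain ⟨hz1, hz2⟩ := step_lemma b hb z y E hy hybd hzrec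
    obtain ⟨hx1, hx2⟩ := ih x z (E / (1 - ‖b‖)) hs' hz1 hz2 (fun n => rfl)
    refine ⟨?_, hx2⟩
    intro ε hε
    obtain ⟨n₀, hn₀⟩ := hx1 ε hε
    refine ⟨n₀, fun n hn => ?_⟩
    have := hn₀ n hn
    rw [Multiset.map_cons, Multiset.prod_cons, ← div_div]
    exact this

open Polynomial in
theorem stmt_2 (d : ℕ) (hd : 1 ≤ d) (β : Fin d → ℂ)
    (hβ : ∀ j, ‖β j‖ < 1)
    (E : ℝ) (hE : 0 < E) (p : Fin d → ℂ)
    (hp : (∏ j, (X - C (β j))) = X ^ d + ∑ i : Fin d, C (p i) * X ^ (i : ℕ))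
    (a e : ℕ → ℂ) (he : ∀ n, ‖e n‖ ≤ E)
    (hrec : ∀ n : ℕ, a (n + d) + ∑ i : Fin d, p i * a (n + i) = e n) :
    (∀ ε > (0 : ℝ), ∃ n₀ : ℕ, ∀ n ≥ n₀,
      ‖a n‖ < E / ∏ j, (1 - ‖β j‖) + ε) ∧
    ∃ B : ℝ, ∀ n : ℕ, ‖a n‖ ≤ B := by
  set s : Multiset ℂ := Multiset.map β Finset.univ.val with hsdef
  have hs : ∀ b ∈ s, ‖b‖ < 1 := by
    intro b hbmem
    rw [hsdef, Multiset.mem_map] at hbmem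
    obtain ⟨j, _, rfl⟩ := hbmem
    exact hβ j
  have hpoly : (s.map (fun b => X - C b)).prod = ∏ j, (X - C (β j)) := by
    rw [hsdef, Multiset.map_map, Finset.prod_eq_multiset_prod]
    rfl
  have hprodR : (s.map (fun b => 1 - ‖b‖)).prod = ∏ j, (1 - ‖β j‖) := by
    rw [hsdef, Multiset.map_map, Finset.prod_eq_multiset_prod]
    rfl
  have haeval : ∀ n, (Polynomial.aeval shiftE (s.map (fun b => X - C b)).prod) a n = e n := by
    intro n
    rw [hpoly, hp]
    have : (Polynomial.aeval shiftE ((X:ℂ[X]) ^ d + ∑ i : Fin d, C (p i) * X ^ (i : ℕ))) a n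
        = a (n + d) + ∑ i : Fin d, p i * a (n + i) := by
      simp only [map_add, map_pow, map_sum, map_mul, aeval_X, aeval_C,
        LinearMap.add_apply, Pi.add_apply, LinearMap.sum_apply, Finset.sum_apply,
        Module.End.mul_apply, Module.algebraMap_end_apply, Pi.smul_apply, smul_eq_mul,
        shiftE_pow]
    rw [this, hrec n]
  have hy : ∀ ε > (0:ℝ), ∃ n₀, ∀ n ≥ n₀, ‖e n‖ < E + ε := by
    intro ε hε
    exact ⟨0, fun n _ => lt_of_le_of_lt (he n) (by linarith)⟩
  obtain ⟨h1, h2⟩ := key_lemma s a e E hs hy ⟨E, he⟩ haeval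
  rw [hprodR] at h1
  exact ⟨h1, h2⟩
end

section
/- Let d ≥ 1 and β₁,…,β_d ∈ ℂ with |β_j| ≠ 1 for all j and at least one |β_j| > 1. Let E > 0 and let (a_n), (e_n) be complex sequences with |e_n| ≤ E for all n, satisfying a_{n+d} + p_{d-1}a_{n+d-1} + ⋯ + p_0 a_n = e_n for all n, where x^d + p_{d-1}x^{d-1} + ⋯ + p_0 = (x-β₁)⋯(x-β_d). If (|a_n|) is bounded, then for each ε > 0 there exists n₀ such that |a_n| < E/∏_{j=1}^d |1-|β_j|| + ε for all n ≥ n₀. -/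
open Polynomial Filter

noncomputable def shiftL : (ℕ → ℂ) →ₗ[ℂ] (ℕ → ℂ) where
  toFun a := fun n => a (n + 1)
  map_add' _ _ := rfl
  map_smul' _ _ := rfl

lemma shiftL_pow (k : ℕ) : ∀ (a : ℕ → ℂ) (n : ℕ), (shiftL ^ k) a n = a (n + k) := by
  induction k with
  | zero => intro a n; simp
  | succ k ih =>
    intro a n
    rw [pow_succ']
    have : (shiftL * shiftL ^ k) a n = (shiftL ^ k) a (n+1) := rfl
    rw [this, ih]
    ring_nf

lemma aeval_XsubC (β : ℂ) (a : ℕ → ℂ) :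
    (Polynomial.aeval shiftL (X - C β)) a = fun n => a (n + 1) - β * a n := by
  have h : aeval shiftL (X - C β) = shiftL - (algebraMap ℂ (Module.End ℂ (ℕ → ℂ))) β := by
    rw [map_sub, aeval_X, aeval_C]
  rw [h]
  funext n
  simp [LinearMap.sub_apply, Module.algebraMap_end_apply, shiftL]

def EvB (f : ℕ → ℂ) (M : ℝ) : Prop :=
  ∀ ε > (0:ℝ), ∃ n₀ : ℕ, ∀ n ≥ n₀, ‖f n‖ < M + ε

lemma step (β : ℂ) (hβ : ‖β‖ ≠ 1) (a : ℕ → ℂ) (B : ℝ)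
    (hB : ∀ n, ‖a n‖ ≤ B) (M : ℝ)
    (h : EvB (fun n => a (n + 1) - β * a n) M) :
    EvB a (M / |1 - ‖β‖|) := by
  set r := ‖β‖ with hr
  set f : ℕ → ℝ := fun n => ‖a n‖ with hf
  set c := limsup f atTop with hc
  have hbb : IsBoundedUnder (· ≤ ·) atTop f := isBoundedUnder_of ⟨B, hB⟩
  have hcb : IsCoboundedUnder (· ≤ ·) atTop f :=
    (isBoundedUnder_of ⟨0, fun n => norm_nonneg _⟩ :
      IsBoundedUnder (· ≥ ·) atTop f).isCoboundedUnder_le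
  have hshift : limsup (fun n => f (n + 1)) atTop = c := by
    have : (fun n => f (n + 1)) = f ∘ (fun n => n + 1) := rfl
    rw [this, Filter.limsup_comp, Filter.map_add_atTop_eq_nat]
  have hbbs : IsBoundedUnder (· ≤ ·) atTop (fun n => f (n+1)) :=
    isBoundedUnder_of ⟨B, fun n => hB _⟩
  have hcbs : IsCoboundedUnder (· ≤ ·) atTop (fun n => f (n+1)) :=
    (isBoundedUnder_of ⟨0, fun n => norm_nonneg _⟩ :
      IsBoundedUnder (· ≥ ·) atTop (fun n => f (n+1))).isCoboundedUnder_le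
  -- eventual bounds from limsup
  have hev : ∀ ε > (0:ℝ), ∀ᶠ n in atTop, f n < c + ε := by
    intro ε hε
    exact eventually_lt_of_limsup_lt (by linarith [hc]) hbb
  have hevs : ∀ ε > (0:ℝ), ∀ᶠ n in atTop, f (n+1) < c + ε := by
    intro ε hε
    exact eventually_lt_of_limsup_lt (by rw [hshift]; linarith) hbbs
  have hevb : ∀ ε > (0:ℝ), ∀ᶠ n in atTop, ‖a (n+1) - β * a n‖ < M + ε := by
    intro ε hε
    obtain ⟨n₀, hn₀⟩ := h ε hε
    exact eventually_atTop.2 ⟨n₀, hn₀⟩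
  have hr0 : 0 ≤ r := norm_nonneg _
  have key : c ≤ M / |1 - r| := by
    rcases lt_or_gt_of_ne hβ with hlt | hgt
    · -- r < 1 : c ≤ r * c + M
      have h1 : ∀ ε > (0:ℝ), c ≤ r * c + M + (r + 1) * ε := by
        intro ε hε
        have hev1 := hev ε hε
        have hev2 := hevb ε hε
        have : ∀ᶠ n in atTop, f (n+1) ≤ r * (c + ε) + (M + ε) := by
          filter_upwards [hev1, hev2] with n h1 h2
          have : f (n+1) ≤ r * f n + ‖a (n+1) - β * a n‖ := by
            have := norm_add_le (a (n+1) - β * a n) (β * a n)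
            simp only [sub_add_cancel] at this
            calc f (n+1) ≤ ‖a (n+1) - β * a n‖ + ‖β * a n‖ := this
              _ = ‖a (n+1) - β * a n‖ + r * f n := by rw [norm_mul]
              _ = r * f n + ‖a (n+1) - β * a n‖ := by ring
          nlinarith [hr0]
        have := Filter.limsup_le_of_le hcbs this
        rw [hshift] at this
        nlinarith
      have h2 : c ≤ r * c + M := by
        by_contra hcon
        push_neg at hcon
        have hδ : (0:ℝ) < (c - (r * c + M)) / (2 * (r + 1)) := by
          apply div_pos (by linarith) (by linarith)
        have := h1 _ hδ
        have he : (r + 1) * ((c - (r * c + M)) / (2 * (r + 1))) = (c - (r * c + M)) / 2 := by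
          field_simp
        linarith
      have : c * (1 - r) ≤ M := by nlinarith
      rw [abs_of_pos (by linarith : (0:ℝ) < 1 - r)]
      rw [le_div_iff₀ (by linarith : (0:ℝ) < 1 - r)]
      linarith
    · -- r > 1 : r * c ≤ c + M
      have h1 : ∀ ε > (0:ℝ), r * c ≤ c + M + 2 * ε + r * ε := by
        intro ε hε
        have hev1 := hevs ε hε
        have hev2 := hevb ε hε
        have : ∀ᶠ n in atTop, f n ≤ ((c + ε) + (M + ε)) / r := by
          filter_upwards [hev1, hev2] with n h1 h2
          have : r * f n ≤ f (n+1) + ‖a (n+1) - β * a n‖ := by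
            have h3 : β * a n = a (n+1) - (a (n+1) - β * a n) := by ring
            calc r * f n = ‖β * a n‖ := by rw [norm_mul]
              _ = ‖a (n+1) - (a (n+1) - β * a n)‖ := by rw [← h3]
              _ ≤ f (n+1) + ‖a (n+1) - β * a n‖ := norm_sub_le _ _
          rw [le_div_iff₀ (by linarith : (0:ℝ) < r)]
          nlinarith
        have hls := Filter.limsup_le_of_le hcb this
        rw [← hc] at hls
        rw [le_div_iff₀ (by linarith : (0:ℝ) < r)] at hls
        nlinarith
      have h2 : r * c ≤ c + M := by
        by_contra hcon
        push_neg at hcon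
        have hδ : (0:ℝ) < (r * c - (c + M)) / (2 * (2 + r)) := by
          apply div_pos (by linarith) (by linarith)
        have := h1 _ hδ
        have he : 2 * ((r * c - (c + M)) / (2 * (2 + r))) + r * ((r * c - (c + M)) / (2 * (2 + r)))
            = (r * c - (c + M)) / 2 := by field_simp
        linarith
      rw [abs_of_neg (by linarith : (1:ℝ) - r < 0)]
      rw [le_div_iff₀ (by linarith : (0:ℝ) < -(1 - r))]
      nlinarith
  intro ε hε
  obtain ⟨n₀, hn₀⟩ := eventually_atTop.1 (hev ε hε)
  exact ⟨n₀, fun n hn => lt_of_lt_of_le (hn₀ n hn) (by linarith)⟩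



lemma main_list : ∀ (l : List ℂ), (∀ β ∈ l, ‖β‖ ≠ 1) →
    ∀ (a : ℕ → ℂ) (B : ℝ), (∀ n, ‖a n‖ ≤ B) →
    ∀ M : ℝ, EvB (fun n => (Polynomial.aeval shiftL (l.map fun β => X - C β).prod) a n) M →
    EvB a (M / (l.map fun β => |1 - ‖β‖|).prod) := by
  intro l
  induction l with
  | nil =>
    intro _ a B hB M hM
    simp only [List.map_nil, List.prod_nil, map_one, Module.End.one_apply] at hM
    simpa using hM
  | cons β l ih =>
    intro hroots a B hB M hM
    set b : ℕ → ℂ := fun n => a (n + 1) - β * a n with hb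
    have hbB : ∀ n, ‖b n‖ ≤ B + ‖β‖ * B := by
      intro n
      calc ‖b n‖ ≤ ‖a (n+1)‖ + ‖β * a n‖ :=
            norm_sub_le _ _
        _ ≤ B + ‖β‖ * B := by
            rw [norm_mul]
            have h1 := hB (n+1)
            have h2 := hB n
            have := norm_nonneg β
            nlinarith
    have hfac : (fun n => (Polynomial.aeval shiftL ((β :: l).map fun β => X - C β).prod) a n)
        = fun n => (Polynomial.aeval shiftL (l.map fun β => X - C β).prod) b n := by
      funext n
      have : ((β :: l).map fun β => X - C β).prod
          = (l.map fun β => X - C β).prod * (X - C β) := by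
        rw [List.map_cons, List.prod_cons, mul_comm]
      rw [this, map_mul, Module.End.mul_apply, aeval_XsubC]
    rw [hfac] at hM
    have hb' := ih (fun γ hγ => hroots γ (List.mem_cons_of_mem _ hγ)) b _ hbB M hM
    have := step β (hroots β (List.mem_cons_self)) a B hB _ hb'
    have heq : M / (l.map fun β => |1 - ‖β‖|).prod / |1 - ‖β‖|
        = M / ((β :: l).map fun β => |1 - ‖β‖|).prod := by
      rw [List.map_cons, List.prod_cons, div_div, mul_comm]
    rwa [heq] at this

open Polynomial in
theorem stmt_3 (d : ℕ) (hd : 1 ≤ d) (β : Fin d → ℂ)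
    (hβ : ∀ j, ‖β j‖ ≠ 1) (hβ' : ∃ j, 1 < ‖β j‖)
    (E : ℝ) (hE : 0 < E) (p : Fin d → ℂ)
    (hp : (∏ j, (X - C (β j))) = X ^ d + ∑ i : Fin d, C (p i) * X ^ (i : ℕ))
    (a e : ℕ → ℂ) (he : ∀ n, ‖e n‖ ≤ E)
    (hrec : ∀ n : ℕ, a (n + d) + ∑ i : Fin d, p i * a (n + i) = e n)
    (hbdd : ∃ B : ℝ, ∀ n : ℕ, ‖a n‖ ≤ B) :
    ∀ ε > (0 : ℝ), ∃ n₀ : ℕ, ∀ n ≥ n₀,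
      ‖a n‖ < E / ∏ j, |1 - ‖β j‖| + ε := by
  obtain ⟨B, hB⟩ := hbdd
  have hprodpoly : ((List.ofFn β).map fun b => X - C b).prod = ∏ j, (X - C (β j)) := by
    rw [List.map_ofFn, List.prod_ofFn]; rfl
  have happ : ∀ n, (Polynomial.aeval shiftL (((List.ofFn β).map fun b => X - C b).prod)) a n
      = e n := by
    intro n
    rw [hprodpoly, hp]
    have expand : ((Polynomial.aeval shiftL) (X ^ d + ∑ i : Fin d, C (p i) * X ^ (i:ℕ))) a n
        = a (n + d) + ∑ i : Fin d, p i * a (n + i) := by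
      rw [map_add, map_sum, LinearMap.add_apply, LinearMap.sum_apply, Pi.add_apply,
        Finset.sum_apply]
      congr 1
      · rw [map_pow, aeval_X]; exact shiftL_pow d a n
      · refine Finset.sum_congr rfl fun i _ => ?_
        rw [map_mul, aeval_C, map_pow, aeval_X, Module.End.mul_apply,
          Module.algebraMap_end_apply, Pi.smul_apply, smul_eq_mul, shiftL_pow]
    rw [expand]
    exact hrec n
  have hEvB : EvB (fun n => (Polynomial.aeval shiftL (((List.ofFn β).map fun b => X - C b).prod)) a n) E := by
    intro ε hε
    refine ⟨0, fun n _ => ?_⟩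
    show ‖(Polynomial.aeval shiftL (((List.ofFn β).map fun b => X - C b).prod)) a n‖ < E + ε
    rw [happ n]
    exact lt_of_le_of_lt (he n) (by linarith)
  have hmain := main_list (List.ofFn β) (by
      intro γ hγ
      rw [List.mem_ofFn] at hγ
      obtain ⟨j, rfl⟩ := hγ
      exact hβ j) a B hB E hEvB
  have hprod : ((List.ofFn β).map fun b => |1 - ‖b‖|).prod
      = ∏ j, |1 - ‖β j‖| := by
    rw [List.map_ofFn, List.prod_ofFn]; rfl
  rw [hprod] at hmain
  exact hmain
end

section
/- Let (a_n) be an integer sequence satisfying a_{n+d} + r_{d-1}a_{n+d-1} + ⋯ + r_0 a_n = e_n with e_n ∈ [0,1) for all n, where x^d + r_{d-1}x^{d-1} + ⋯ + r_0 = (x-β₁)⋯(x-β_d) with all |β_j| ≠ 1. If either all |β_j| < 1, or (|a_n|) is bounded, then (a_n) is ultimately periodic, and every element a of its cycle satisfies |a| ≤ 1/∏_{j=1}^d |1-|β_j||. -/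
open Polynomial

noncomputable section AuxSRS4

/-- The shift operator on complex sequences. -/
def shiftL4 : Module.End ℂ (ℕ → ℂ) where
  toFun f := fun n => f (n+1)
  map_add' := fun _ _ => rfl
  map_smul' := fun _ _ => rfl

lemma shiftL4_pow (k : ℕ) (f : ℕ → ℂ) (n : ℕ) : (shiftL4 ^ k) f n = f (n + k) := by
  induction k generalizing f n with
  | zero => rfl
  | succ k ih =>
    rw [pow_succ, Module.End.mul_apply]
    show (shiftL4 ^ k) (shiftL4 f) n = _
    rw [ih]
    rfl

/-- Apply the product of factors (S - β) for β in l, left factor applied first. -/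
def applyL4 : List ℂ → (ℕ → ℂ) → (ℕ → ℂ)
  | [], f => f
  | β :: l, f => applyL4 l (fun n => f (n+1) - β * f n)

lemma aeval_sub_apply (β : ℂ) (f : ℕ → ℂ) (n : ℕ) :
    (aeval shiftL4 (X - C β)) f n = f (n+1) - β * f n := by
  rw [map_sub, aeval_X, aeval_C, LinearMap.sub_apply]
  simp [Module.algebraMap_end_apply, shiftL4]

lemma applyL4_eq_aeval (l : List ℂ) (f : ℕ → ℂ) :
    applyL4 l f = (aeval shiftL4 ((l.map fun b => X - C b).prod)) f := by
  induction l generalizing f with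
  | nil => simp [applyL4]
  | cons β l ih =>
    show applyL4 l _ = _
    rw [ih, List.map_cons, List.prod_cons, mul_comm, map_mul, Module.End.mul_apply]
    congr 1
    funext n
    exact (aeval_sub_apply β f n).symm

lemma applyL4_shift (l : List ℂ) (f : ℕ → ℂ) (m : ℕ) :
    applyL4 l (fun n => f (n + m)) = fun n => applyL4 l f (n + m) := by
  induction l generalizing f with
  | nil => rfl
  | cons β l ih =>
    show applyL4 l _ = _
    have h : (fun n => (fun n => f (n + m)) (n + 1) - β * (fun n => f (n + m)) n)
        = (fun n => (fun k => f (k+1) - β * f k) (n + m)) := by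
      funext n
      simp only [Nat.add_right_comm]
    rw [h, ih (fun k => f (k+1) - β * f k)]
    rfl


lemma aeval_rhs4 (d : ℕ) (r : Fin d → ℝ) (f : ℕ → ℂ) (n : ℕ) :
    (aeval shiftL4 (X ^ d + ∑ i : Fin d, C ((r i : ℂ)) * X ^ (i:ℕ))) f n
      = f (n + d) + ∑ i : Fin d, (r i : ℂ) * f (n + i) := by
  rw [map_add, map_sum, LinearMap.add_apply, LinearMap.sum_apply]
  simp only [map_mul, map_pow, aeval_X, aeval_C]
  rw [Pi.add_apply, Finset.sum_apply, shiftL4_pow]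
  congr 1
  refine Finset.sum_congr rfl fun i _ => ?_
  rw [Module.End.mul_apply, Module.algebraMap_end_apply]
  rw [Pi.smul_apply, shiftL4_pow, smul_eq_mul]

lemma bound_of_step4 (β : ℂ) (hβ : ‖β‖ < 1) (f g : ℕ → ℂ)
    (hg : ∀ n, g n = f (n+1) - β * f n) (B : ℝ) (hB : ∀ n, ‖g n‖ ≤ B) :
    ∀ n, ‖f n‖ ≤ max (‖f 0‖) (B / (1 - ‖β‖)) := by
  set x := ‖β‖ with hx
  have hx0 : 0 ≤ x := norm_nonneg β
  have hx1 : 0 < 1 - x := by linarith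
  set M := max (‖f 0‖) (B / (1 - x)) with hM
  have hMB : B ≤ (1 - x) * M := by
    have h1 : B / (1 - x) ≤ M := le_max_right _ _
    calc B = (1 - x) * (B / (1 - x)) := by field_simp
    _ ≤ (1 - x) * M := by nlinarith
  intro n
  induction n with
  | zero => exact le_max_left _ _
  | succ n ih =>
    have hf : f (n+1) = β * f n + g n := by rw [hg n]; ring
    calc ‖f (n+1)‖ = ‖β * f n + g n‖ := by rw [hf]
    _ ≤ ‖β * f n‖ + ‖g n‖ := norm_add_le _ _
    _ = x * ‖f n‖ + ‖g n‖ := by rw [norm_mul]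
    _ ≤ x * M + B := by
        have := norm_nonneg (f n)
        nlinarith [hB n]
    _ ≤ M := by nlinarith

lemma bounded_of_applyL4 (l : List ℂ) (hl : ∀ b ∈ l, ‖b‖ < 1) (B : ℝ) :
    ∀ f : ℕ → ℂ, (∀ n, ‖applyL4 l f n‖ ≤ B) →
    ∃ M, ∀ n, ‖f n‖ ≤ M := by
  induction l with
  | nil => exact fun f hB => ⟨B, hB⟩
  | cons β l ih =>
    intro f hB
    obtain ⟨M', hM'⟩ := ih (fun b hb => hl b (List.mem_cons_of_mem _ hb))
      (fun n => f (n+1) - β * f n) hB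
    exact ⟨_, bound_of_step4 β (hl β (List.mem_cons_self)) f _
      (fun n => rfl) M' hM'⟩

lemma iter_formula4 (β : ℂ) (f g : ℕ → ℂ) (hg : ∀ n, g n = f (n+1) - β * f n) :
    ∀ m n, f (n + m) = β ^ m * f n + ∑ k ∈ Finset.range m, β ^ (m - 1 - k) * g (n + k) := by
  intro m
  induction m with
  | zero => simp
  | succ m ih =>
    intro n
    have h1 : f (n + (m+1)) = β * f (n + m) + g (n + m) := by
      have := hg (n + m); rw [show n + (m+1) = n + m + 1 by omega]; rw [this]; ring
    rw [h1, ih n, Finset.sum_range_succ]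
    have h2 : ∀ k ∈ Finset.range m, β * (β ^ (m - 1 - k) * g (n + k))
        = β ^ (m + 1 - 1 - k) * g (n + k) := by
      intro k hk
      rw [Finset.mem_range] at hk
      rw [show m + 1 - 1 - k = (m - 1 - k) + 1 by omega, pow_succ]
      ring
    rw [mul_add, Finset.mul_sum, Finset.sum_congr rfl h2]
    rw [show m + 1 - 1 - m = 0 by omega]
    ring

lemma periodic_bound4 (β : ℂ) (hβ : ‖β‖ ≠ 1) (p : ℕ) (hp : 0 < p)
    (f g : ℕ → ℂ) (hper : ∀ n, f (n + p) = f n) (hg : ∀ n, g n = f (n+1) - β * f n)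
    (B : ℝ) (hB : ∀ n, ‖g n‖ ≤ B) :
    ∀ n, ‖f n‖ * |1 - ‖β‖| ≤ B := by
  set x := ‖β‖ with hx
  have hx0 : 0 ≤ x := norm_nonneg β
  have hB0 : 0 ≤ B := le_trans (norm_nonneg _) (hB 0)
  have key : ∀ n, (1 - β ^ p) * f n = ∑ k ∈ Finset.range p, β ^ (p - 1 - k) * g (n + k) := by
    intro n
    have h := iter_formula4 β f g hg p n
    rw [hper n] at h
    linear_combination h
  set S : ℝ := ∑ k ∈ Finset.range p, x ^ k with hS
  have habs : ∀ n, ‖1 - β ^ p‖ * ‖f n‖ ≤ B * S := by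
    intro n
    rw [← norm_mul, key n]
    calc ‖∑ k ∈ Finset.range p, β ^ (p - 1 - k) * g (n + k)‖
        ≤ ∑ k ∈ Finset.range p, ‖β ^ (p - 1 - k) * g (n + k)‖ :=
          norm_sum_le _ _
    _ ≤ ∑ k ∈ Finset.range p, x ^ (p - 1 - k) * B := by
        refine Finset.sum_le_sum fun k _ => ?_
        rw [norm_mul, norm_pow]
        exact mul_le_mul_of_nonneg_left (hB _) (pow_nonneg hx0 _)
    _ = B * S := by
        rw [hS, ← Finset.sum_range_reflect (fun k => x ^ k) p, Finset.mul_sum]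
        exact Finset.sum_congr rfl fun k _ => by ring
  have habsxp : ‖β ^ p‖ = x ^ p := by rw [norm_pow]
  intro n
  set F := ‖f n‖ with hF
  have hF0 : 0 ≤ F := norm_nonneg _
  rcases lt_or_gt_of_ne hβ with h1 | h1
  · -- x < 1
    have hD : 1 - x ^ p ≤ ‖1 - β ^ p‖ := by
      have := norm_sub_norm_le 1 (β ^ p)
      simpa [habsxp] using this
    have hxp : x ^ p < 1 := pow_lt_one₀ hx0 h1 hp.ne'
    have hDpos : 0 < ‖1 - β ^ p‖ := lt_of_lt_of_le (by linarith) hD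
    have hgeo : S * (1 - x) = 1 - x ^ p := by
      have := geom_sum_mul x p
      rw [hS]; nlinarith [this]
    rw [abs_of_pos (by linarith : (0:ℝ) < 1 - x)]
    nlinarith [habs n, mul_le_mul_of_nonneg_right (habs n) (le_of_lt (by linarith : (0:ℝ) < 1 - x)),
      mul_le_mul_of_nonneg_left hD hB0, mul_nonneg hF0 (le_of_lt (by linarith : (0:ℝ) < 1 - x))]
  · -- x > 1
    have hD : x ^ p - 1 ≤ ‖1 - β ^ p‖ := by
      rw [norm_sub_rev]
      have := norm_sub_norm_le (β ^ p) 1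
      simpa [habsxp] using this
    have hxp : 1 < x ^ p := one_lt_pow₀ h1 hp.ne'
    have hDpos : 0 < ‖1 - β ^ p‖ := lt_of_lt_of_le (by linarith) hD
    have hgeo : S * (x - 1) = x ^ p - 1 := by
      have := geom_sum_mul x p
      rw [hS]; nlinarith [this]
    rw [abs_of_neg (by linarith : (1:ℝ) - x < 0)]
    nlinarith [habs n, mul_le_mul_of_nonneg_right (habs n) (le_of_lt (by linarith : (0:ℝ) < x - 1)),
      mul_le_mul_of_nonneg_left hD hB0, mul_nonneg hF0 (le_of_lt (by linarith : (0:ℝ) < x - 1))]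


lemma cyclic_bound4 (l : List ℂ) (hl : ∀ b ∈ l, ‖b‖ ≠ 1)
    (p : ℕ) (hp : 0 < p) (B : ℝ) :
    ∀ f : ℕ → ℂ, (∀ n, f (n + p) = f n) →
    (∀ n, ‖applyL4 l f n‖ ≤ B) →
    ∀ n, ‖f n‖ * (l.map fun b => |1 - ‖b‖|).prod ≤ B := by
  induction l with
  | nil => intro f _ hB n; simpa [applyL4] using hB n
  | cons β l ih =>
    intro f hper hB
    set g : ℕ → ℂ := fun n => f (n+1) - β * f n with hgdef
    have hgper : ∀ n, g (n + p) = g n := by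
      intro n
      simp only [g]
      rw [show n + p + 1 = (n + 1) + p by omega, hper, hper]
    set P : ℝ := (l.map fun b => |1 - ‖b‖|).prod with hP
    have hPpos : 0 < P := by
      rw [hP]
      apply List.prod_pos
      intro x hx
      obtain ⟨b, hb, rfl⟩ := List.mem_map.mp hx
      exact abs_pos.mpr (sub_ne_zero.mpr fun h => hl b (List.mem_cons_of_mem _ hb) h.symm)
    have hg' := ih (fun b hb => hl b (List.mem_cons_of_mem _ hb)) g hgper hB
    have hg'' : ∀ n, ‖g n‖ ≤ B / P := fun n => (le_div_iff₀ hPpos).mpr (hg' n)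
    have hf := periodic_bound4 β (hl β (List.mem_cons_self)) p hp f g hper
      (fun n => rfl) (B / P) hg''
    intro n
    simp only [List.map_cons, List.prod_cons]
    calc ‖f n‖ * (|1 - ‖β‖| * P)
        = (‖f n‖ * |1 - ‖β‖|) * P := by ring
    _ ≤ (B / P) * P := mul_le_mul_of_nonneg_right (hf n) hPpos.le
    _ = B := div_mul_cancel₀ _ hPpos.ne'

end AuxSRS4

open Polynomial in
theorem stmt_4 (d : ℕ) (hd : 1 ≤ d) (β : Fin d → ℂ)
    (hβ : ∀ j, ‖β j‖ ≠ 1) (r : Fin d → ℝ)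
    (hr : (∏ j, (X - C (β j))) = X ^ d + ∑ i : Fin d, C ((r i : ℂ)) * X ^ (i : ℕ))
    (a : ℕ → ℤ)
    (hrec : ∀ n : ℕ, ((a (n + d) : ℝ) + ∑ i : Fin d, r i * a (n + i)) ∈ Set.Ico (0 : ℝ) 1)
    (hyp : (∀ j, ‖β j‖ < 1) ∨ (∃ B : ℝ, ∀ n : ℕ, |(a n : ℝ)| ≤ B)) :
    ∃ n₀ p : ℕ, 0 < p ∧ (∀ n ≥ n₀, a (n + p) = a n) ∧
      ∀ n ≥ n₀, |(a n : ℝ)| ≤ 1 / ∏ j, |1 - ‖β j‖| := by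
  classical
  set l : List ℂ := List.ofFn β with hl
  set aC : ℕ → ℂ := fun n => ((a n : ℝ) : ℂ) with haC
  set eR : ℕ → ℝ := fun n => (a (n+d) : ℝ) + ∑ i : Fin d, r i * a (n + i) with heR
  -- key identity
  have heq : ∀ n, applyL4 l aC n = ((eR n : ℝ) : ℂ) := by
    intro n
    rw [applyL4_eq_aeval]
    have hprod : ((l.map fun b => X - C b).prod) = ∏ j, (X - C (β j)) := by
      rw [hl, List.map_ofFn]
      exact List.prod_ofFn
    rw [hprod, hr, aeval_rhs4]
    simp only [haC, heR]
    push_cast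
    ring
  have habsaC : ∀ n, ‖aC n‖ = |(a n : ℝ)| := fun n => (Complex.norm_real _).trans (Real.norm_eq_abs _)
  have heb : ∀ n, ‖applyL4 l aC n‖ ≤ 1 := by
    intro n
    rw [heq n, Complex.norm_real, Real.norm_eq_abs]
    obtain ⟨h0, h1⟩ := hrec n
    rw [abs_of_nonneg h0]
    exact le_of_lt h1
  -- boundedness
  obtain ⟨M, hM⟩ : ∃ M, ∀ n, ‖aC n‖ ≤ M := by
    rcases hyp with h | ⟨B, hB⟩
    · refine bounded_of_applyL4 l ?_ 1 aC heb
      intro b hb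
      obtain ⟨j, rfl⟩ := List.mem_ofFn.mp hb
      exact h j
    · exact ⟨B, fun n => by rw [habsaC]; exact hB n⟩
  -- integer bound
  have hMa : ∀ n, a n ∈ Finset.Icc (-⌈M⌉) ⌈M⌉ := by
    intro n
    have h1 : |(a n : ℝ)| ≤ (⌈M⌉ : ℝ) := le_trans (by rw [← habsaC]; exact hM n) (Int.le_ceil M)
    rw [abs_le] at h1
    rw [Finset.mem_Icc]
    constructor
    · exact_mod_cast h1.1
    · exact_mod_cast h1.2
  -- pigeonhole
  set v : ℕ → (Fin d → ℤ) := fun n i => a (n + i) with hv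
  set t : Finset (Fin d → ℤ) := Fintype.piFinset (fun _ => Finset.Icc (-⌈M⌉) ⌈M⌉) with ht
  have hmaps : ∀ n ∈ Finset.range (t.card + 1), v n ∈ t := by
    intro n _
    rw [ht, Fintype.mem_piFinset]
    exact fun i => hMa _
  obtain ⟨m, -, n', -, hmn, hveq⟩ :=
    Finset.exists_ne_map_eq_of_card_lt_of_maps_to
      (by rw [Finset.card_range]; omega) hmaps
  -- wlog m < n'
  obtain ⟨m, n', hlt, hveq⟩ : ∃ m n' : ℕ, m < n' ∧ v m = v n' := by
    rcases hmn.lt_or_gt with h | h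
    · exact ⟨m, n', h, hveq⟩
    · exact ⟨n', m, h, hveq.symm⟩
  -- determinism
  have key : ∀ s u : ℕ, (∀ i : Fin d, a (s + i) = a (u + i)) → a (s + d) = a (u + d) := by
    intro s u h
    obtain ⟨hs0, hs1⟩ := hrec s
    obtain ⟨hu0, hu1⟩ := hrec u
    have hsum : (∑ i : Fin d, r i * a (s + i)) = ∑ i : Fin d, r i * a (u + i) :=
      Finset.sum_congr rfl fun i _ => by rw [h i]
    have hlt1 : ((a (s + d) - a (u + d) : ℤ) : ℝ) < 1 := by push_cast; linarith [hsum ▸ hs1]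
    have hgt1 : (-1 : ℝ) < ((a (s + d) - a (u + d) : ℤ) : ℝ) := by push_cast; linarith [hsum ▸ hs0]
    have h1 : (a (s + d) - a (u + d) : ℤ) < 1 := by exact_mod_cast hlt1
    have h2 : (-1 : ℤ) < a (s + d) - a (u + d) := by exact_mod_cast hgt1
    omega
  have det : ∀ k, a (m + k) = a (n' + k) := by
    intro k
    induction k using Nat.strong_induction_on with
    | _ k ih =>
      by_cases hk : k < d
      · exact congrFun hveq ⟨k, hk⟩
      · push_neg at hk
        have h1 : m + k = m + (k - d) + d := by omega
        have h2 : n' + k = n' + (k - d) + d := by omega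
        rw [h1, h2]
        refine key _ _ fun i => ?_
        have h3 : m + (k - d) + (i : ℕ) = m + ((k - d) + i) := by omega
        have h4 : n' + (k - d) + (i : ℕ) = n' + ((k - d) + i) := by omega
        rw [h3, h4]
        exact ih _ (by omega)
  set p := n' - m with hp
  have hppos : 0 < p := by omega
  have hperiod : ∀ n ≥ m, a (n + p) = a n := by
    intro n hn
    have h1 := det (n - m)
    have e1 : m + (n - m) = n := by omega
    have e2 : n' + (n - m) = n + p := by omega
    rw [e1, e2] at h1
    exact h1.symm
  refine ⟨m, p, hppos, hperiod, ?_⟩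
  -- cycle bound
  set f : ℕ → ℂ := fun k => aC (k + m) with hf
  have hfper : ∀ k, f (k + p) = f k := by
    intro k
    have : a (k + m + p) = a (k + m) := hperiod (k + m) (by omega)
    simp only [f, haC]
    rw [show k + p + m = k + m + p by omega, this]
  have hfB : ∀ k, ‖applyL4 l f k‖ ≤ 1 := by
    intro k
    have := applyL4_shift l aC m
    rw [hf, this]
    exact heb (k + m)
  have hbnd := cyclic_bound4 l (fun b hb => by
      obtain ⟨j, rfl⟩ := List.mem_ofFn.mp hb; exact hβ j) p hppos 1 f hfper hfB
  have hPeq : (l.map fun b => |1 - ‖b‖|).prod = ∏ j, |1 - ‖β j‖| := by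
    rw [hl, List.map_ofFn]
    exact List.prod_ofFn
  have hPpos : 0 < ∏ j, |1 - ‖β j‖| := by
    apply Finset.prod_pos
    intro j _
    exact abs_pos.mpr (sub_ne_zero.mpr fun h => hβ j h.symm)
  intro n hn
  have h1 := hbnd (n - m)
  rw [hPeq] at h1
  have h2 : f (n - m) = aC n := by
    have e3 : n - m + m = n := by omega
    rw [hf]
    simp only
    rw [e3]
  rw [h2, habsaC] at h1
  rw [le_div_iff₀ hPpos]
  exact h1
end

section
/- Let r₀, r₁ ∈ ℝ and let α₁, α₂ ∈ ℂ with x² + r₁x + r₀ = (x-α₁)(x-α₂) and |α₁|, |α₂| ≠ 1. Let (a_n) be a bounded integer sequence satisfying a_{n+2} + r₁a_{n+1} + r₀a_n ∈ [0,1) for all n. Then (a_n) is ultimately periodic, and for all n beyond the preperiod one has |a_{n+1} - α₁a_n| ≤ 1/||α₂|-1|, |a_{n+1} - α₂a_n| ≤ 1/||α₁|-1|, and |a_n| ≤ 1/(||α₁|-1|·||α₂|-1|). -/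
open Filter

lemma srs_key (α : ℂ) (hα : ‖α‖ ≠ 1) (z w : ℕ → ℂ) (E C : ℝ)
    (n₀ p : ℕ) (hp : 0 < p)
    (hzrec : ∀ n, n₀ ≤ n → z (n + 1) = α * z n + w n)
    (hw : ∀ n, n₀ ≤ n → ‖w n‖ ≤ E)
    (hper : ∀ n, n₀ ≤ n → z (n + p) = z n)
    (hC : ∀ n, ‖z n‖ ≤ C) :
    ∀ n, n₀ ≤ n → ‖z n‖ ≤ E / |‖α‖ - 1| := by
  set t := ‖α‖ with ht
  have ht0 : 0 ≤ t := norm_nonneg _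
  have hE : 0 ≤ E := le_trans (norm_nonneg _) (hw n₀ le_rfl)
  have hC0 : 0 ≤ C := le_trans (norm_nonneg _) (hC 0)
  intro n hn
  rcases lt_or_gt_of_ne hα with hlt | hgt
  · -- contraction case
    rw [abs_of_neg (by linarith : t - 1 < 0), neg_sub]
    have h1t : (0:ℝ) < 1 - t := by linarith
    set L := E / (1 - t) with hL
    have hL0 : 0 ≤ L := div_nonneg hE (le_of_lt h1t)
    have hstep : ∀ k, ‖z (n + k)‖ ≤ t ^ k * ‖z n‖ + L := by
      intro k
      induction k with
      | zero => simpa using hL0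
      | succ k ih =>
        have h1 : z (n + k + 1) = α * z (n + k) + w (n + k) := hzrec _ (by omega)
        have h2 : ‖z (n + k + 1)‖ ≤ t * ‖z (n + k)‖ + E := by
          rw [h1]
          calc ‖α * z (n + k) + w (n + k)‖
              ≤ ‖α * z (n + k)‖ + ‖w (n + k)‖ :=
                norm_add_le _ _
            _ ≤ t * ‖z (n + k)‖ + E := by
                rw [norm_mul]; exact add_le_add le_rfl (hw _ (by omega))
        have hLE : t * L + E = L := by rw [hL]; field_simp [h1t.ne']; ring
        have : n + (k + 1) = n + k + 1 := by omega
        rw [this]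
        calc ‖z (n + k + 1)‖ ≤ t * ‖z (n + k)‖ + E := h2
          _ ≤ t * (t ^ k * ‖z n‖ + L) + E := by nlinarith
          _ = t ^ (k + 1) * ‖z n‖ + (t * L + E) := by ring
          _ = t ^ (k + 1) * ‖z n‖ + L := by rw [hLE]
    have hperm : ∀ m, z (n + m * p) = z n := by
      intro m
      induction m with
      | zero => simp
      | succ m ih =>
        have e : n + (m + 1) * p = n + m * p + p := by ring
        rw [e, hper _ (by omega), ih]
    have hkey2 : ∀ m, ‖z n‖ - L ≤ t ^ m * C := by
      intro m
      have h1 := hstep (m * p)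
      rw [hperm m] at h1
      have h2 : t ^ (m * p) * ‖z n‖ ≤ t ^ (m * p) * C :=
        mul_le_mul_of_nonneg_left (hC n) (pow_nonneg ht0 _)
      have h3 : t ^ (m * p) ≤ t ^ m :=
        pow_le_pow_of_le_one ht0 (le_of_lt hlt) (Nat.le_mul_of_pos_right m hp)
      have h4 : t ^ (m * p) * C ≤ t ^ m * C := mul_le_mul_of_nonneg_right h3 hC0
      linarith
    have htend : Tendsto (fun m : ℕ => t ^ m * C) atTop (nhds 0) := by
      simpa using (tendsto_pow_atTop_nhds_zero_of_lt_one ht0 hlt).mul_const C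
    have := ge_of_tendsto' htend hkey2
    linarith
  · -- expansion case
    rw [abs_of_pos (by linarith : (0:ℝ) < t - 1)]
    have ht1 : (0:ℝ) < t - 1 := by linarith
    set L := E / (t - 1) with hL
    by_contra hcon
    push_neg at hcon
    set d := ‖z n‖ - L with hd
    have hd0 : 0 < d := by simp [hd]; linarith
    have htL : t * L = L + E := by rw [hL]; field_simp [ht1.ne']; ring
    have hgrow : ∀ k, L + t ^ k * d ≤ ‖z (n + k)‖ := by
      intro k
      induction k with
      | zero => simp [hd]
      | succ k ih =>
        have h1 : z (n + k + 1) = α * z (n + k) + w (n + k) := hzrec _ (by omega)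
        have h2 : ‖α * z (n + k)‖ ≤ ‖z (n + k + 1)‖ + E := by
          rw [h1]
          calc ‖α * z (n + k)‖
              = ‖(α * z (n + k) + w (n + k)) - w (n + k)‖ := by ring_nf
            _ ≤ ‖α * z (n + k) + w (n + k)‖ + ‖w (n + k)‖ :=
                norm_sub_le _ _
            _ ≤ ‖α * z (n + k) + w (n + k)‖ + E :=
                add_le_add le_rfl (hw _ (by omega))
        rw [norm_mul] at h2
        have h3 : t * (L + t ^ k * d) ≤ t * ‖z (n + k)‖ :=
          mul_le_mul_of_nonneg_left ih (by linarith)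
        have e : n + (k + 1) = n + k + 1 := by omega
        rw [e]
        have hpow : t * t ^ k = t ^ (k + 1) := by ring
        nlinarith [pow_nonneg ht0 k]
    obtain ⟨k, hk⟩ := pow_unbounded_of_one_lt ((C - L) / d) hgt
    have h5 := hgrow k
    have h6 := hC (n + k)
    have h7 : C - L < t ^ k * d := by
      rw [div_lt_iff₀ hd0] at hk; linarith
    linarith

theorem stmt_5 (r₀ r₁ : ℝ) (α₁ α₂ : ℂ)
    (hfact : ∀ x : ℂ, x ^ 2 + r₁ * x + r₀ = (x - α₁) * (x - α₂))
    (hα₁ : ‖α₁‖ ≠ 1) (hα₂ : ‖α₂‖ ≠ 1)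
    (a : ℕ → ℤ) (hbdd : ∃ B : ℝ, ∀ n : ℕ, |(a n : ℝ)| ≤ B)
    (hrec : ∀ n : ℕ, ((a (n + 2) : ℝ) + r₁ * a (n + 1) + r₀ * a n) ∈ Set.Ico (0 : ℝ) 1) :
    ∃ n₀ p : ℕ, 0 < p ∧ (∀ n ≥ n₀, a (n + p) = a n) ∧
      ∀ n ≥ n₀,
        ‖(a (n + 1) : ℂ) - α₁ * a n‖ ≤ 1 / |‖α₂‖ - 1| ∧
        ‖(a (n + 1) : ℂ) - α₂ * a n‖ ≤ 1 / |‖α₁‖ - 1| ∧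
        |(a n : ℝ)| ≤ 1 / (|‖α₁‖ - 1| * |‖α₂‖ - 1|) := by
  obtain ⟨B, hB⟩ := hbdd
  have hB0 : 0 ≤ B := le_trans (abs_nonneg _) (hB 0)
  -- Vieta
  have hr0 : (r₀ : ℂ) = α₁ * α₂ := by linear_combination hfact 0
  have hr1 : (r₁ : ℂ) = -(α₁ + α₂) := by linear_combination hfact 1 - hfact 0
  -- determinism
  have hdet : ∀ m n : ℕ, a m = a n → a (m + 1) = a (n + 1) → a (m + 2) = a (n + 2) := by
    intro m n h1 h2
    obtain ⟨hm1, hm2⟩ := hrec m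
    obtain ⟨hn1, hn2⟩ := hrec n
    rw [h1, h2] at hm1 hm2
    have habs : |((a (m + 2) - a (n + 2) : ℤ) : ℝ)| < 1 := by
      push_cast
      rw [abs_lt]
      constructor <;> linarith
    rw [← Int.cast_abs] at habs
    have h3 : |a (m + 2) - a (n + 2)| < 1 := by exact_mod_cast habs
    rw [abs_lt] at h3
    omega
  -- pigeonhole
  have hpair : ∃ m m' : ℕ, m < m' ∧ a m' = a m ∧ a (m' + 1) = a (m + 1) := by
    set N := ⌈B⌉ with hN
    have hmem : ∀ n : ℕ, (a n, a (n + 1)) ∈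
        ((Finset.Icc (-N) N ×ˢ Finset.Icc (-N) N : Finset (ℤ × ℤ)) : Set (ℤ × ℤ)) := by
      intro n
      have hin : ∀ k : ℕ, a k ∈ Finset.Icc (-N) N := by
        intro k
        have h1 := hB k
        rw [abs_le] at h1
        have hc : B ≤ (N : ℝ) := Int.le_ceil B
        simp only [Finset.mem_Icc]
        constructor
        · exact_mod_cast (by linarith : -(N:ℝ) ≤ (a k : ℝ))
        · exact_mod_cast (le_trans h1.2 hc)
      simp only [Finset.coe_product, Set.mem_prod]
      exact ⟨by exact_mod_cast hin n, by exact_mod_cast hin (n + 1)⟩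
    obtain ⟨m, -, m', -, hne, heq⟩ :=
      Set.infinite_univ.exists_ne_map_eq_of_mapsTo
        (f := fun n => (a n, a (n + 1))) (fun n _ => hmem n) (Finset.finite_toSet _)
    rw [Prod.mk.injEq] at heq
    rcases hne.lt_or_gt with h | h
    · exact ⟨m, m', h, heq.1.symm, heq.2.symm⟩
    · exact ⟨m', m, h, heq.1, heq.2⟩
  obtain ⟨m, m', hmm, hpa, hpa1⟩ := hpair
  set p := m' - m with hpdef
  have hp : 0 < p := by omega
  -- periodicity
  have hq : ∀ k, a (m + k + p) = a (m + k) ∧ a (m + (k + 1) + p) = a (m + (k + 1)) := by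
    intro k
    induction k with
    | zero =>
      constructor
      · have e : m + 0 + p = m' := by omega
        have e' : m + 0 = m := by omega
        rw [e, e', hpa]
      · have e : m + (0 + 1) + p = m' + 1 := by omega
        have e' : m + (0 + 1) = m + 1 := by omega
        rw [e, e', hpa1]
    | succ k ih =>
      refine ⟨ih.2, ?_⟩
      have h1 : a ((m + k + p) + 1) = a ((m + k) + 1) := by
        have e : (m + k + p) + 1 = m + (k + 1) + p := by omega
        have e' : (m + k) + 1 = m + (k + 1) := by omega
        rw [e, e']; exact ih.2
      have h2 := hdet (m + k + p) (m + k) ih.1 h1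
      have e : m + (k + 1 + 1) + p = (m + k + p) + 2 := by omega
      have e' : m + (k + 1 + 1) = (m + k) + 2 := by omega
      rw [e, e']; exact h2
  have hper : ∀ n, m ≤ n → a (n + p) = a n := by
    intro n hn
    obtain ⟨k, rfl⟩ := Nat.exists_eq_add_of_le hn
    exact (hq k).1
  -- error sequence
  set e : ℕ → ℂ := fun n => (((a (n + 2) : ℝ) + r₁ * a (n + 1) + r₀ * a n : ℝ) : ℂ) with he
  have hew : ∀ n : ℕ, n ≤ n → ‖e n‖ ≤ 1 := by
    intro n _
    obtain ⟨h1, h2⟩ := hrec n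
    rw [he]
    simp only [Complex.norm_real, Real.norm_eq_abs]
    rw [abs_le]; constructor <;> linarith
  -- b sequence
  set b : ℕ → ℂ := fun n => (a (n + 1) : ℂ) - α₁ * a n with hbdef
  set c : ℕ → ℂ := fun n => (a (n + 1) : ℂ) - α₂ * a n with hcdef
  have hbrec : ∀ n : ℕ, m ≤ n → b (n + 1) = α₂ * b n + e n := by
    intro n _
    simp only [hbdef, he]
    push_cast
    linear_combination (-(a (n + 1) : ℂ)) * hr1 - (a n : ℂ) * hr0
  have hcrec : ∀ n : ℕ, m ≤ n → c (n + 1) = α₁ * c n + e n := by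
    intro n _
    simp only [hcdef, he]
    push_cast
    linear_combination (-(a (n + 1) : ℂ)) * hr1 - (a n : ℂ) * hr0
  have habs_a : ∀ n : ℕ, ‖(a n : ℂ)‖ = |(a n : ℝ)| := by
    intro n
    rw [show ((a n : ℤ) : ℂ) = ((a n : ℝ) : ℂ) by push_cast; ring, Complex.norm_real, Real.norm_eq_abs]
  have hbC : ∀ n, ‖b n‖ ≤ B + ‖α₁‖ * B := by
    intro n
    calc ‖b n‖ ≤ ‖(a (n + 1) : ℂ)‖ + ‖α₁ * a n‖ :=
          norm_sub_le _ _
      _ ≤ B + ‖α₁‖ * B := by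
          rw [norm_mul, habs_a, habs_a]
          exact add_le_add (hB _) (mul_le_mul_of_nonneg_left (hB _) (norm_nonneg _))
  have hcC : ∀ n, ‖c n‖ ≤ B + ‖α₂‖ * B := by
    intro n
    calc ‖c n‖ ≤ ‖(a (n + 1) : ℂ)‖ + ‖α₂ * a n‖ :=
          norm_sub_le _ _
      _ ≤ B + ‖α₂‖ * B := by
          rw [norm_mul, habs_a, habs_a]
          exact add_le_add (hB _) (mul_le_mul_of_nonneg_left (hB _) (norm_nonneg _))
  have hbper : ∀ n, m ≤ n → b (n + p) = b n := by
    intro n hn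
    simp only [hbdef]
    rw [show n + p + 1 = (n + 1) + p by omega, hper (n + 1) (by omega), hper n hn]
  have hcper : ∀ n, m ≤ n → c (n + p) = c n := by
    intro n hn
    simp only [hcdef]
    rw [show n + p + 1 = (n + 1) + p by omega, hper (n + 1) (by omega), hper n hn]
  have hb := srs_key α₂ hα₂ b e 1 (B + ‖α₁‖ * B) m p hp hbrec
    (fun n _ => hew n le_rfl) hbper hbC
  have hc := srs_key α₁ hα₁ c e 1 (B + ‖α₂‖ * B) m p hp hcrec
    (fun n _ => hew n le_rfl) hcper hcC
  -- a bound
  have haper : ∀ n, m ≤ n → ((a (n + p) : ℂ)) = (a n : ℂ) := by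
    intro n hn; exact_mod_cast congrArg (fun (x : ℤ) => (x : ℂ)) (hper n hn)
  have harec : ∀ n : ℕ, m ≤ n → ((a (n + 1) : ℂ)) = α₁ * (a n : ℂ) + b n := by
    intro n _; simp only [hbdef]; ring
  have haC : ∀ n, ‖(a n : ℂ)‖ ≤ B := by intro n; rw [habs_a]; exact hB n
  have ha := srs_key α₁ hα₁ (fun n => (a n : ℂ)) b (1 / |‖α₂‖ - 1|) B m p hp
    harec hb haper haC
  refine ⟨m, p, hp, fun n hn => hper n hn, fun n hn => ⟨hb n hn, hc n hn, ?_⟩⟩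
  have := ha n hn
  rw [habs_a] at this
  rw [div_div, mul_comm] at this
  exact this
end

section
/- Let r₀, r₁ ∈ ℝ with x² + r₁x + r₀ = (x-α₁)(x-α₂) for real α₁, α₂ with α₂ ∉ {1,-1}, and suppose 0 ≤ α₂ < 1. Let (a_n) be a purely periodic integer sequence satisfying a_{n+2} + r₁a_{n+1} + r₀a_n ∈ [0,1) for all n. Then 0 ≤ a_{n+1} - α₁a_n < 1/(1-α₂) for all n. -/
theorem stmt_6 (r₀ r₁ α₁ α₂ : ℝ)
    (hfact : ∀ x : ℝ, x ^ 2 + r₁ * x + r₀ = (x - α₁) * (x - α₂))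
    (hα₂ : 0 ≤ α₂ ∧ α₂ < 1)
    (a : ℕ → ℤ) (p : ℕ) (hp : 0 < p) (hper : ∀ n : ℕ, a (n + p) = a n)
    (hrec : ∀ n : ℕ, ((a (n + 2) : ℝ) + r₁ * a (n + 1) + r₀ * a n) ∈ Set.Ico (0 : ℝ) 1) :
    ∀ n : ℕ, 0 ≤ (a (n + 1) : ℝ) - α₁ * a n ∧ (a (n + 1) : ℝ) - α₁ * a n < 1 / (1 - α₂) := by
  obtain ⟨hα₂0, hα₂1⟩ := hα₂
  have h0 := hfact 0
  have h1 := hfact 1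
  have hr0 : r₀ = α₁ * α₂ := by nlinarith [h0]
  have hr1 : r₁ = -(α₁ + α₂) := by nlinarith [h0, h1]
  subst hr0 hr1
  set b : ℕ → ℝ := fun n => (a (n + 1) : ℝ) - α₁ * a n with hb
  have hbper : ∀ n, b (n + p) = b n := by
    intro n
    simp only [hb]
    have h1 : n + p + 1 = (n + 1) + p := by omega
    rw [h1, hper (n + 1), hper n]
  have hstep : ∀ n, α₂ * b n ≤ b (n + 1) ∧ b (n + 1) < α₂ * b n + 1 := by
    intro n
    obtain ⟨h1, h2⟩ := hrec n
    simp only [hb]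
    rw [show n + 1 + 1 = n + 2 from rfl]
    constructor <;> nlinarith
  have hmul : ∀ k n, b (n + k * p) = b n := by
    intro k
    induction k with
    | zero => simp
    | succ k ih =>
      intro n
      have : n + (k + 1) * p = (n + k * p) + p := by ring
      rw [this, hbper, ih]
  have hmod : ∀ n, b (n % p) = b n := by
    intro n
    conv_rhs => rw [show n = n % p + (n / p) * p by rw [Nat.mod_add_div']]
    rw [hmul]
  have hS : ((Finset.range p).image b).Nonempty := by
    simp [Finset.image_nonempty, Finset.nonempty_range_iff]
    omega
  set S := (Finset.range p).image b
  set m := S.min' hS with hm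
  set M := S.max' hS with hM
  have hbm : ∀ n, m ≤ b n ∧ b n ≤ M := by
    intro n
    have hmem : b n ∈ S := by
      rw [← hmod n]
      exact Finset.mem_image.mpr ⟨n % p, Finset.mem_range.mpr (Nat.mod_lt n hp), rfl⟩
    exact ⟨S.min'_le _ hmem, S.le_max' _ hmem⟩
  have hkey : ∀ x, (∃ n, b n = x) → (α₂ * m ≤ x ∧ x < α₂ * M + 1) := by
    rintro x ⟨k, rfl⟩
    have hpk : k + p - 1 + 1 = k + p := by omega
    have hs := hstep (k + p - 1)
    rw [hpk, hbper] at hs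
    have h1 := (hbm (k + p - 1)).1
    have h2 := (hbm (k + p - 1)).2
    constructor
    · nlinarith [hs.1]
    · nlinarith [hs.2]
  have hm0 : 0 ≤ m := by
    obtain ⟨k, _, hbk⟩ := Finset.mem_image.mp (S.min'_mem hS)
    have := (hkey m ⟨k, hbk⟩).1
    nlinarith
  have hMlt : M < 1 / (1 - α₂) := by
    obtain ⟨k, _, hbk⟩ := Finset.mem_image.mp (S.max'_mem hS)
    have := (hkey M ⟨k, hbk⟩).2
    rw [lt_div_iff₀ (by linarith)]
    nlinarith
  intro n
  exact ⟨le_trans hm0 (hbm n).1, lt_of_le_of_lt (hbm n).2 hMlt⟩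
end

section
/- Let r₀, r₁ ∈ ℝ with x² + r₁x + r₀ = (x-α₁)(x-α₂) for real α₁, α₂ with α₂ > 1. Let (a_n) be a purely periodic integer sequence satisfying a_{n+2} + r₁a_{n+1} + r₀a_n ∈ [0,1) for all n. Then -1/(α₂-1) < a_{n+1} - α₁a_n ≤ 0 for all n. -/
theorem stmt_7 (r₀ r₁ α₁ α₂ : ℝ)
    (hfact : ∀ x : ℝ, x ^ 2 + r₁ * x + r₀ = (x - α₁) * (x - α₂))
    (hα₂ : 1 < α₂)
    (a : ℕ → ℤ) (p : ℕ) (hp : 0 < p) (hper : ∀ n : ℕ, a (n + p) = a n)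
    (hrec : ∀ n : ℕ, ((a (n + 2) : ℝ) + r₁ * a (n + 1) + r₀ * a n) ∈ Set.Ico (0 : ℝ) 1) :
    ∀ n : ℕ, -(1 / (α₂ - 1)) < (a (n + 1) : ℝ) - α₁ * a n ∧ (a (n + 1) : ℝ) - α₁ * a n ≤ 0 := by
  have hA : (0:ℝ) < α₂ - 1 := by linarith
  have h0 := hfact 0
  have h1 := hfact 1
  have hm1 := hfact (-1)
  have hr₀ : r₀ = α₁ * α₂ := by nlinarith
  have hr₁ : r₁ = -(α₁ + α₂) := by nlinarith
  set b : ℕ → ℝ := fun n => (a (n+1) : ℝ) - α₁ * a n with hb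
  have hstep : ∀ n, α₂ * b n ≤ b (n+1) ∧ b (n+1) < α₂ * b n + 1 := by
    intro n
    obtain ⟨h1', h2'⟩ := hrec n
    rw [hr₀, hr₁] at h1' h2'
    have e : n + 1 + 1 = n + 2 := rfl
    constructor
    · simp only [hb, e]; nlinarith
    · simp only [hb, e]; nlinarith
  have hbper : ∀ n, b (n + p) = b n := by
    intro n; simp only [hb]
    rw [show n + p + 1 = n + 1 + p by ring, hper, hper]
  have hub : ∀ n, b n ≤ 0 := by
    intro n; by_contra h; push_neg at h
    have key : ∀ k, α₂ ^ k * b n ≤ b (n + k) := by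
      intro k; induction k with
      | zero => simp
      | succ k ih =>
        have hs := (hstep (n+k)).1
        have hpow : (0:ℝ) < α₂ ^ k := pow_pos (by linarith) k
        calc α₂ ^ (k+1) * b n = α₂ * (α₂ ^ k * b n) := by ring
          _ ≤ α₂ * b (n+k) := by nlinarith
          _ ≤ b (n+k+1) := hs
          _ = b (n + (k+1)) := by rw [Nat.add_assoc]
    have hp' := key p
    rw [hbper] at hp'
    have hone : (1:ℝ) < α₂ ^ p := one_lt_pow₀ hα₂ hp.ne'
    nlinarith
  intro n
  refine ⟨?_, hub n⟩
  show -(1 / (α₂ - 1)) < b n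
  by_contra h; push_neg at h
  set c := 1/(α₂-1) with hcdef
  have hc : (α₂ - 1) * c = 1 := by rw [hcdef]; field_simp
  have hbn : b n ≤ -c := by linarith
  have key : ∀ k, b (n + k + 1) < b n ∧ b (n + k + 1) ≤ -c := by
    intro k; induction k with
    | zero =>
      have h2 := (hstep n).2
      have : (α₂ - 1) * b n ≤ (α₂ - 1) * (-c) := by nlinarith
      constructor
      · show b (n+1) < b n; nlinarith
      · show b (n+1) ≤ -c; nlinarith
    | succ k ih =>
      obtain ⟨ih1, ih2⟩ := ih
      have h2 := (hstep (n+k+1)).2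
      have : (α₂ - 1) * b (n+k+1) ≤ (α₂ - 1) * (-c) := by nlinarith
      have hlt : b (n+k+1+1) < b (n+k+1) := by nlinarith
      have heq : n + (k+1) + 1 = n + k + 1 + 1 := by ring
      rw [heq]
      exact ⟨by linarith, by linarith⟩
  obtain ⟨k1, _⟩ := key (p - 1)
  have heq : n + (p-1) + 1 = n + p := by omega
  rw [heq, hbper] at k1
  exact lt_irrefl _ k1
end

section
/- Let r₀, r₁ ∈ ℝ with x² + r₁x + r₀ = (x-α₁)(x-α₂) for real α₁, α₂ with -1 < α₂ < 0. Let (a_n) be a purely periodic integer sequence satisfying a_{n+2} + r₁a_{n+1} + r₀a_n ∈ [0,1) for all n. Then α₂/(1-α₂²) < a_{n+1} - α₁a_n < 1/(1-α₂²) for all n. -/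
theorem stmt_8 (r₀ r₁ α₁ α₂ : ℝ)
    (hfact : ∀ x : ℝ, x ^ 2 + r₁ * x + r₀ = (x - α₁) * (x - α₂))
    (hα₂ : -1 < α₂ ∧ α₂ < 0)
    (a : ℕ → ℤ) (p : ℕ) (hp : 0 < p) (hper : ∀ n : ℕ, a (n + p) = a n)
    (hrec : ∀ n : ℕ, ((a (n + 2) : ℝ) + r₁ * a (n + 1) + r₀ * a n) ∈ Set.Ico (0 : ℝ) 1) :
    ∀ n : ℕ, α₂ / (1 - α₂ ^ 2) < (a (n + 1) : ℝ) - α₁ * a n ∧ (a (n + 1) : ℝ) - α₁ * a n < 1 / (1 - α₂ ^ 2) := by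
  obtain ⟨hα₂l, hα₂r⟩ := hα₂
  have hr₀ : r₀ = α₁ * α₂ := by have h := hfact 0; nlinarith [hfact 0]
  have hr₁ : r₁ = -(α₁ + α₂) := by have h0 := hfact 0; have h1 := hfact 1; nlinarith
  have hsq : (0:ℝ) < α₂ ^ 2 := by nlinarith
  have hden : (0:ℝ) < 1 - α₂ ^ 2 := by nlinarith
  set b : ℕ → ℝ := fun n => (a (n+1) : ℝ) - α₁ * a n with hb
  have hε : ∀ n, 0 ≤ b (n+1) - α₂ * b n ∧ b (n+1) - α₂ * b n < 1 := by
    intro n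
    have heq : b (n+1) - α₂ * b n = (a (n + 2) : ℝ) + r₁ * a (n + 1) + r₀ * a n := by
      simp only [hb, hr₀, hr₁]
      have : n + 1 + 1 = n + 2 := rfl
      rw [this]; ring
    rw [heq]
    exact hrec n
  set c := α₂ / (1 - α₂ ^ 2) with hc
  set C := (1:ℝ) / (1 - α₂ ^ 2) with hC
  have hcc : c * (1 - α₂ ^ 2) = α₂ := div_mul_cancel₀ _ (ne_of_gt hden)
  have hCC : C * (1 - α₂ ^ 2) = 1 := div_mul_cancel₀ _ (ne_of_gt hden)
  have keyL : ∀ n, α₂ ^ 2 * (b n - c) < b (n + 2) - c := by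
    intro n
    obtain ⟨h1, h2⟩ := hε n
    obtain ⟨h3, h4⟩ := hε (n+1)
    have : n + 1 + 1 = n + 2 := rfl
    rw [this] at h3 h4
    nlinarith [mul_pos (neg_pos.mpr hα₂r) (by linarith : (0:ℝ) < 1 - (b (n+1) - α₂ * b n))]
  have keyU : ∀ n, b (n + 2) - C < α₂ ^ 2 * (b n - C) := by
    intro n
    obtain ⟨h1, h2⟩ := hε n
    obtain ⟨h3, h4⟩ := hε (n+1)
    have : n + 1 + 1 = n + 2 := rfl
    rw [this] at h3 h4
    nlinarith [mul_nonneg (neg_nonneg.mpr (le_of_lt hα₂r)) h1]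
  have iterL : ∀ n m, 1 ≤ m → (α₂ ^ 2) ^ m * (b n - c) < b (n + 2 * m) - c := by
    intro n m hm
    induction m with
    | zero => omega
    | succ k ih =>
      rcases Nat.eq_or_lt_of_le hm with h | h
      · have : k = 0 := by omega
        subst this
        simpa using keyL n
      · have hk : 1 ≤ k := by omega
        have h1 := ih hk
        have h2 := keyL (n + 2 * k)
        have hidx : n + 2 * k + 2 = n + 2 * (k + 1) := by ring
        rw [hidx] at h2
        calc (α₂ ^ 2) ^ (k+1) * (b n - c) = α₂ ^ 2 * ((α₂ ^ 2) ^ k * (b n - c)) := by ring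
          _ < α₂ ^ 2 * (b (n + 2 * k) - c) := by exact (mul_lt_mul_iff_right₀ hsq).mpr h1
          _ < b (n + 2 * (k+1)) - c := h2
  have iterU : ∀ n m, 1 ≤ m → b (n + 2 * m) - C < (α₂ ^ 2) ^ m * (b n - C) := by
    intro n m hm
    induction m with
    | zero => omega
    | succ k ih =>
      rcases Nat.eq_or_lt_of_le hm with h | h
      · have : k = 0 := by omega
        subst this
        simpa using keyU n
      · have hk : 1 ≤ k := by omega
        have h1 := ih hk
        have h2 := keyU (n + 2 * k)
        have hidx : n + 2 * k + 2 = n + 2 * (k + 1) := by ring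
        rw [hidx] at h2
        calc b (n + 2 * (k+1)) - C < α₂ ^ 2 * (b (n + 2 * k) - C) := h2
          _ < α₂ ^ 2 * ((α₂ ^ 2) ^ k * (b n - C)) := (mul_lt_mul_iff_right₀ hsq).mpr h1
          _ = (α₂ ^ 2) ^ (k+1) * (b n - C) := by ring
  have hbper : ∀ n, b (n + 2 * p) = b n := by
    intro n
    have e1 : a (n + 2 * p) = a n := by
      rw [show n + 2 * p = n + p + p from by ring, hper, hper]
    have e2 : a (n + 2 * p + 1) = a (n + 1) := by
      rw [show n + 2 * p + 1 = n + 1 + p + p from by ring, hper, hper]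
    simp only [hb, e1, e2]
  have hq0 : (0:ℝ) < (α₂ ^ 2) ^ p := pow_pos hsq p
  have hq1 : (α₂ ^ 2) ^ p < 1 := pow_lt_one₀ (le_of_lt hsq) (by nlinarith) (by omega)
  intro n
  have hL := iterL n p hp
  have hU := iterU n p hp
  rw [hbper n] at hL hU
  constructor
  · have : 0 < b n - c := by nlinarith
    have := sub_pos.mp this
    simpa [hb, hc] using this
  · have : 0 < C - b n := by nlinarith
    have := sub_pos.mp this
    simpa [hb, hC] using this
end

section
/- Let r₀, r₁ ∈ ℝ with x² + r₁x + r₀ = (x-α₁)(x-α₂) for real α₁, α₂ with α₂ < -1. Let (a_n) be a purely periodic integer sequence satisfying a_{n+2} + r₁a_{n+1} + r₀a_n ∈ [0,1) for all n. Then -1/(α₂²-1) < a_{n+1} - α₁a_n < -α₂/(α₂²-1) for all n. -/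
theorem stmt_9 (r₀ r₁ α₁ α₂ : ℝ)
    (hfact : ∀ x : ℝ, x ^ 2 + r₁ * x + r₀ = (x - α₁) * (x - α₂))
    (hα₂ : α₂ < -1)
    (a : ℕ → ℤ) (p : ℕ) (hp : 0 < p) (hper : ∀ n : ℕ, a (n + p) = a n)
    (hrec : ∀ n : ℕ, ((a (n + 2) : ℝ) + r₁ * a (n + 1) + r₀ * a n) ∈ Set.Ico (0 : ℝ) 1) :
    ∀ n : ℕ, -1 / (α₂ ^ 2 - 1) < (a (n + 1) : ℝ) - α₁ * a n ∧ (a (n + 1) : ℝ) - α₁ * a n < -α₂ / (α₂ ^ 2 - 1) := by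
  have h0 := hfact 0
  have h1 := hfact 1
  have hr₀ : r₀ = α₁ * α₂ := by nlinarith [h0]
  have hr₁ : r₁ = -(α₁ + α₂) := by nlinarith [h0, h1]
  set b : ℕ → ℝ := fun n => (a (n + 1) : ℝ) - α₁ * a n with hb
  set ε : ℕ → ℝ := fun n => (a (n + 2) : ℝ) + r₁ * a (n + 1) + r₀ * a n with hε
  have hε0 : ∀ n, 0 ≤ ε n := fun n => (hrec n).1
  have hε1 : ∀ n, ε n < 1 := fun n => (hrec n).2
  have hstep : ∀ n, b (n + 1) = α₂ * b n + ε n := by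
    intro n
    simp only [hb, hε, hr₀, hr₁]
    push_cast
    ring
  have hiter : ∀ n m, b (n + m) = α₂ ^ m * b n +
      ∑ j ∈ Finset.range m, α₂ ^ (m - 1 - j) * ε (n + j) := by
    intro n m
    induction m with
    | zero => simp
    | succ m ih =>
      have h1' : n + (m + 1) = (n + m) + 1 := by ring
      rw [h1', hstep, ih, Finset.sum_range_succ, mul_add, Finset.mul_sum]
      have h2 : ∀ j ∈ Finset.range m,
          α₂ * (α₂ ^ (m - 1 - j) * ε (n + j)) = α₂ ^ (m + 1 - 1 - j) * ε (n + j) := by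
        intro j hj
        rw [Finset.mem_range] at hj
        have : m + 1 - 1 - j = (m - 1 - j) + 1 := by omega
        rw [this, pow_succ]
        ring
      rw [Finset.sum_congr rfl h2]
      have h3 : m + 1 - 1 - m = 0 := by omega
      rw [h3, pow_succ, pow_zero]
      ring
  have ha2 : ∀ n, a (n + 2 * p) = a n := by
    intro n
    rw [show n + 2 * p = n + p + p by ring, hper, hper]
  have hbper : ∀ n, b (n + 2 * p) = b n := by
    intro n
    simp only [hb]
    rw [show n + 2 * p + 1 = (n + 1) + 2 * p by ring, ha2, ha2]
  -- key constants
  have hE : (0:ℝ) < α₂ ^ 2 - 1 := by nlinarith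
  have hc : (1:ℝ) < α₂ ^ 2 := by nlinarith
  have hcp : (1:ℝ) < (α₂ ^ 2) ^ p := one_lt_pow₀ hc hp.ne'
  intro n
  set S : ℝ := ∑ j ∈ Finset.range (2 * p), α₂ ^ (2 * p - 1 - j) * ε (n + j) with hS
  have hbS : b n * (1 - (α₂ ^ 2) ^ p) = S := by
    have h := hiter n (2 * p)
    rw [hbper n] at h
    rw [← pow_mul]
    linarith [h]
  have hreflect : S = ∑ k ∈ Finset.range (2 * p), α₂ ^ k * ε (n + (2 * p - 1 - k)) := by
    rw [← Finset.sum_range_reflect (fun k => α₂ ^ k * ε (n + (2 * p - 1 - k))) (2 * p)]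
    apply Finset.sum_congr rfl
    intro j hj
    rw [Finset.mem_range] at hj
    have h4 : 2 * p - 1 - (2 * p - 1 - j) = j := by omega
    rw [h4]
  have hOddp : ∀ k : ℕ, Odd k → α₂ ^ k < 0 := fun k hk => hk.pow_neg (by linarith)
  have hEvenp : ∀ k : ℕ, Even k → 0 < α₂ ^ k := fun k hk => hk.pow_pos (by nlinarith)
  -- lower bound on S
  have hlow : α₂ * ∑ i ∈ Finset.range p, (α₂ ^ 2) ^ i < S := by
    have hsum : ∀ q : ℕ, (∑ k ∈ Finset.range (2 * q), (if Even k then (0:ℝ) else α₂ ^ k))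
        = α₂ * ∑ i ∈ Finset.range q, (α₂ ^ 2) ^ i := by
      intro q
      induction q with
      | zero => simp
      | succ q ih =>
        rw [show 2 * (q + 1) = 2 * q + 1 + 1 by ring, Finset.sum_range_succ,
          Finset.sum_range_succ, ih, Finset.sum_range_succ]
        have h2q : Even (2 * q) := even_two_mul q
        have h2q1 : ¬ Even (2 * q + 1) := by simp [Nat.even_add_one, h2q]
        simp only [h2q, h2q1, if_true, if_false]
        have hx : α₂ ^ (2 * q + 1) = (α₂ ^ 2) ^ q * α₂ := by
          rw [pow_succ, pow_mul]
        rw [hx]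
        ring
    rw [← hsum p, hreflect]
    apply Finset.sum_lt_sum
    · intro k hk
      by_cases hev : Even k
      · simp only [hev, if_true]
        exact mul_nonneg (hEvenp k hev).le (hε0 _)
      · simp only [hev, if_false]
        have h5 := hOddp k (Nat.not_even_iff_odd.mp hev)
        nlinarith [hε1 (n + (2 * p - 1 - k)), hε0 (n + (2 * p - 1 - k))]
    · refine ⟨1, Finset.mem_range.mpr (by omega), ?_⟩
      have h1o : ¬ Even 1 := by decide
      simp only [h1o, if_false, pow_one]
      nlinarith [hε1 (n + (2 * p - 1 - 1)), hε0 (n + (2 * p - 1 - 1))]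
  -- upper bound on S
  have hupp : S < ∑ i ∈ Finset.range p, (α₂ ^ 2) ^ i := by
    have hsum : ∀ q : ℕ, (∑ k ∈ Finset.range (2 * q), (if Even k then α₂ ^ k else (0:ℝ)))
        = ∑ i ∈ Finset.range q, (α₂ ^ 2) ^ i := by
      intro q
      induction q with
      | zero => simp
      | succ q ih =>
        rw [show 2 * (q + 1) = 2 * q + 1 + 1 by ring, Finset.sum_range_succ,
          Finset.sum_range_succ, ih, Finset.sum_range_succ]
        have h2q : Even (2 * q) := even_two_mul q
        have h2q1 : ¬ Even (2 * q + 1) := by simp [Nat.even_add_one, h2q]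
        simp only [h2q, h2q1, if_true, if_false]
        have hx : α₂ ^ (2 * q) = (α₂ ^ 2) ^ q := pow_mul α₂ 2 q
        rw [hx]
        ring
    rw [← hsum p, hreflect]
    apply Finset.sum_lt_sum
    · intro k hk
      by_cases hev : Even k
      · simp only [hev, if_true]
        nlinarith [hε1 (n + (2 * p - 1 - k)), hε0 (n + (2 * p - 1 - k)), hEvenp k hev]
      · simp only [hev, if_false]
        have h5 := hOddp k (Nat.not_even_iff_odd.mp hev)
        nlinarith [hε0 (n + (2 * p - 1 - k))]
    · refine ⟨0, Finset.mem_range.mpr (by omega), ?_⟩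
      simp only [Even.zero, if_true, pow_zero, one_mul]
      exact hε1 _
  have hG : (∑ i ∈ Finset.range p, (α₂ ^ 2) ^ i) * (α₂ ^ 2 - 1) = (α₂ ^ 2) ^ p - 1 :=
    geom_sum_mul (α₂ ^ 2) p
  set G : ℝ := ∑ i ∈ Finset.range p, (α₂ ^ 2) ^ i with hGdef
  set P : ℝ := (α₂ ^ 2) ^ p with hPdef
  constructor
  · show -1 / (α₂ ^ 2 - 1) < b n
    rw [div_lt_iff₀ hE]
    -- from b n * (1 - P) = S < G, G*(E) = P - 1
    have h5 : b n * (1 - P) * (α₂ ^ 2 - 1) < G * (α₂ ^ 2 - 1) := by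
      apply mul_lt_mul_of_pos_right _ hE
      rw [hbS]; exact hupp
    rw [hG] at h5
    nlinarith [h5, hcp]
  · show b n < -α₂ / (α₂ ^ 2 - 1)
    rw [lt_div_iff₀ hE]
    have h5 : (α₂ * G) * (α₂ ^ 2 - 1) < b n * (1 - P) * (α₂ ^ 2 - 1) := by
      apply mul_lt_mul_of_pos_right _ hE
      rw [hbS]; exact hlow
    have h6 : α₂ * (P - 1) < b n * (1 - P) * (α₂ ^ 2 - 1) := by
      calc α₂ * (P - 1) = (α₂ * G) * (α₂ ^ 2 - 1) := by rw [mul_assoc, hG]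
        _ < _ := h5
    nlinarith [h6, hcp]
end

section
/- Let r₀, r₁ ∈ ℝ. The map τ_{(r₀,r₁)}(a₀,a₁) = (a₁, -⌊r₀a₀ + r₁a₁⌋) on ℤ² has a nontrivial cycle all of whose elements have the same sign if and only if -2 < r₀ + r₁ < 0. In particular, if -1 ≤ r₀ + r₁ < 0 then the constant sequence (1) is a cycle of τ_{(r₀,r₁)}, and if -2 < r₀ + r₁ < -1 then (-1) is a cycle. -/
/-- `a` is a periodic integer sequence with period `p > 0` that is a cycle of the
two-dimensional SRS map `τ_{(r₀,r₁)}`, i.e. `r₀·aₙ + r₁·aₙ₊₁ + aₙ₊₂ ∈ [0,1)` for all `n`. -/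
def SRSCycle (r₀ r₁ : ℝ) (a : ℕ → ℤ) (p : ℕ) : Prop :=
  0 < p ∧ (∀ n : ℕ, a (n + p) = a n) ∧
    ∀ n : ℕ, (r₀ * a n + r₁ * a (n + 1) + (a (n + 2) : ℝ)) ∈ Set.Ico (0 : ℝ) 1

private lemma shift_sum (a : ℕ → ℝ) (p : ℕ) (hper : ∀ n, a (n + p) = a n) :
    ∑ n ∈ Finset.range p, a (n + 1) = ∑ n ∈ Finset.range p, a n := by
  have h1 : ∑ n ∈ Finset.range (p + 1), a n
      = (∑ n ∈ Finset.range p, a (n + 1)) + a 0 := Finset.sum_range_succ' a p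
  have h2 : ∑ n ∈ Finset.range (p + 1), a n
      = (∑ n ∈ Finset.range p, a n) + a p := Finset.sum_range_succ a p
  have h3 : a p = a 0 := by simpa using hper 0
  linarith

private lemma const_cycle (r₀ r₁ : ℝ) (t : ℤ) (h0 : 0 ≤ t * r₀ + t * r₁ + t)
    (h1 : t * r₀ + t * r₁ + t < 1) : SRSCycle r₀ r₁ (fun _ => t) 1 := by
  refine ⟨one_pos, fun n => rfl, fun n => ?_⟩
  constructor <;> simp only [Set.mem_Ico] <;> push_cast <;> nlinarith

theorem stmt_10 (r₀ r₁ : ℝ) :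
    ((∃ (a : ℕ → ℤ) (p : ℕ), SRSCycle r₀ r₁ a p ∧
        ((∀ n, 0 < a n) ∨ (∀ n, a n < 0))) ↔ (-2 < r₀ + r₁ ∧ r₀ + r₁ < 0)) ∧
    (-1 ≤ r₀ + r₁ → r₀ + r₁ < 0 → SRSCycle r₀ r₁ (fun _ => 1) 1) ∧
    (-2 < r₀ + r₁ → r₀ + r₁ < -1 → SRSCycle r₀ r₁ (fun _ => -1) 1) := by
  have hpos : -1 ≤ r₀ + r₁ → r₀ + r₁ < 0 → SRSCycle r₀ r₁ (fun _ => 1) 1 := by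
    intro h1 h2
    apply const_cycle <;> push_cast <;> linarith
  have hneg : -2 < r₀ + r₁ → r₀ + r₁ < -1 → SRSCycle r₀ r₁ (fun _ => -1) 1 := by
    intro h1 h2
    apply const_cycle <;> push_cast <;> linarith
  refine ⟨⟨?_, ?_⟩, hpos, hneg⟩
  · rintro ⟨a, p, ⟨hp, hper, hcyc⟩, hsign⟩
    set b : ℕ → ℝ := fun n => (a n : ℝ) with hb
    have hperR : ∀ n, b (n + p) = b n := fun n => by simp [hb, hper n]
    have hperR' : ∀ n, (fun n => b (n + 1)) (n + p) = b (n + 1) := by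
      intro n
      show b (n + p + 1) = b (n + 1)
      have : n + p + 1 = (n + 1) + p := by ring
      rw [this, hperR]
    set S : ℝ := ∑ n ∈ Finset.range p, b n with hS
    have hs1 : ∑ n ∈ Finset.range p, b (n + 1) = S := shift_sum b p hperR
    have hs2 : ∑ n ∈ Finset.range p, b (n + 2) = S := by
      have := shift_sum (fun n => b (n + 1)) p hperR'
      have h2 : ∀ n, n + 1 + 1 = n + 2 := fun n => rfl
      calc ∑ n ∈ Finset.range p, b (n + 2)
          = ∑ n ∈ Finset.range p, b (n + 1 + 1) := by simp
        _ = ∑ n ∈ Finset.range p, b (n + 1) := this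
        _ = S := hs1
    have hT : ∑ n ∈ Finset.range p, (r₀ * b n + r₁ * b (n + 1) + b (n + 2))
        = (r₀ + r₁ + 1) * S := by
      rw [Finset.sum_add_distrib, Finset.sum_add_distrib, ← Finset.mul_sum,
        ← Finset.mul_sum, hs1, hs2, ← hS]
      ring
    have hT0 : 0 ≤ (r₀ + r₁ + 1) * S := by
      rw [← hT]
      exact Finset.sum_nonneg fun n _ => (hcyc n).1
    have hTp : (r₀ + r₁ + 1) * S < p := by
      calc (r₀ + r₁ + 1) * S
          = ∑ n ∈ Finset.range p, (r₀ * b n + r₁ * b (n + 1) + b (n + 2)) := hT.symm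
        _ < ∑ n ∈ Finset.range p, (1 : ℝ) := by
            apply Finset.sum_lt_sum_of_nonempty
            · exact Finset.nonempty_range_iff.mpr hp.ne'
            · exact fun n _ => (hcyc n).2
        _ = p := by simp
    rcases hsign with hall | hall
    · have hSp : (p : ℝ) ≤ S := by
        calc (p : ℝ) = ∑ _n ∈ Finset.range p, (1 : ℝ) := by simp
          _ ≤ S := Finset.sum_le_sum fun n _ => by
              have := hall n
              simp only [hb]
              exact_mod_cast this
      have hppos : (0 : ℝ) < p := by exact_mod_cast hp
      constructor <;> nlinarith
    · have hSp : S ≤ -(p : ℝ) := by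
        calc S ≤ ∑ _n ∈ Finset.range p, (-1 : ℝ) := Finset.sum_le_sum fun n _ => by
              have := hall n
              simp only [hb]
              have : a n ≤ -1 := by omega
              exact_mod_cast this
          _ = -(p : ℝ) := by simp
      have hppos : (0 : ℝ) < p := by exact_mod_cast hp
      constructor <;> nlinarith
  · rintro ⟨h1, h2⟩
    by_cases h : -1 ≤ r₀ + r₁
    · exact ⟨fun _ => 1, 1, hpos h h2, Or.inl fun n => one_pos⟩
    · exact ⟨fun _ => -1, 1, hneg h1 (by linarith), Or.inr fun n => by norm_num⟩
end

section
/- Let r₀, r₁ ∈ ℝ. If the two-dimensional SRS map τ_{(r₀,r₁)} has a cycle (a₀,…,a_{p-1}) whose elements have alternating signs (a_i·a_{i+1} < 0 for all i, indices mod p), then |r₀ - r₁ + 1| < 1/2. Moreover, τ_{(r₀,r₁)} has a cycle of the form (t, -t) with t ∈ ℤ \ {0} if and only if r₀ - r₁ + 1 = 0. -/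
private lemma sum_alt_bound (f : ℕ → ℝ) (hf : ∀ n, f n ∈ Set.Ico (0:ℝ) 1) (m : ℕ) :
    |∑ n ∈ Finset.range (2*(m+1)), (-1:ℝ)^n * f n| < m+1 := by
  induction m with
  | zero =>
      have h0 := hf 0
      have h1 := hf 1
      simp only [Set.mem_Ico] at h0 h1
      have : (2*1 : ℕ) = 2 := rfl
      rw [this, Finset.sum_range_succ, Finset.sum_range_succ, Finset.sum_range_zero]
      simp only [pow_zero, pow_one, one_mul, neg_one_mul, zero_add]
      rw [abs_lt]
      constructor <;> push_cast <;> linarith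
  | succ k ih =>
      have he : (2*(k+2) : ℕ) = (2*(k+1)) + 1 + 1 := by ring
      rw [he, Finset.sum_range_succ, Finset.sum_range_succ]
      have hev : Even (2*(k+1)) := even_two_mul _
      have hod : Odd (2*(k+1)+1) := Even.add_one hev
      rw [hev.neg_one_pow, hod.neg_one_pow]
      have h0 := hf (2*(k+1))
      have h1 := hf (2*(k+1)+1)
      simp only [Set.mem_Ico] at h0 h1
      rw [abs_lt] at ih ⊢
      constructor <;> push_cast at ih ⊢ <;> [nlinarith; nlinarith]

private lemma sum_shift (g : ℕ → ℝ) (p : ℕ) (hg : ∀ n, g (n+p) = g n) :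
    ∑ n ∈ Finset.range p, g (n+1) = ∑ n ∈ Finset.range p, g n := by
  have h1 : ∑ n ∈ Finset.range (p+1), g n = (∑ n ∈ Finset.range p, g (n+1)) + g 0 :=
    Finset.sum_range_succ' g p
  have h2 : ∑ n ∈ Finset.range (p+1), g n = (∑ n ∈ Finset.range p, g n) + g p :=
    Finset.sum_range_succ g p
  have h3 : g p = g 0 := by simpa using hg 0
  linarith

theorem stmt_11 (r₀ r₁ : ℝ) :
    ((∃ (a : ℕ → ℤ) (p : ℕ), SRSCycle r₀ r₁ a p ∧ ∀ n, a n * a (n + 1) < 0) →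
      |r₀ - r₁ + 1| < 1 / 2) ∧
    ((∃ t : ℤ, t ≠ 0 ∧ SRSCycle r₀ r₁ (fun n => (-1) ^ n * t) 2) ↔ r₀ - r₁ + 1 = 0) := by
  constructor
  · rintro ⟨a, p, ⟨hp, hper, hmem⟩, halt⟩
    set s : ℝ := r₀ - r₁ + 1 with hs
    -- no term is zero
    have hne : ∀ n, a n ≠ 0 := by
      intro n h
      have := halt n
      simp [h] at this
    -- sign constancy of (-1)^n * a n
    have hsign : ∀ n, 0 < ((-1)^n * a n) * a 0 := by
      intro n
      induction n with
      | zero => simpa using mul_self_pos.mpr (hne 0)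
      | succ n ih =>
          have h1 := halt n
          rcases Nat.even_or_odd n with he | ho
          · rw [he.neg_one_pow, one_mul] at ih
            rw [(he.add_one).neg_one_pow]
            nlinarith [sq_nonneg (a n), sq_nonneg (a 0)]
          · rw [ho.neg_one_pow] at ih
            rw [(ho.add_one).neg_one_pow, one_mul]
            nlinarith [sq_nonneg (a n), sq_nonneg (a 0)]
    -- p is even
    have hpe : Even p := by
      by_contra h
      have ho : Odd p := Nat.odd_iff.mpr (Nat.not_even_iff.mp h)
      have h1 := hsign p
      have hap : a p = a 0 := by simpa using hper 0
      rw [ho.neg_one_pow, hap] at h1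
      nlinarith [mul_self_nonneg (a 0)]
    obtain ⟨m0, hm0⟩ := hpe
    have hm0' : p = 2 * m0 := by omega
    obtain ⟨k, hk⟩ : ∃ k, m0 = k + 1 := by
      have : 0 < m0 := by omega
      exact ⟨m0 - 1, by omega⟩
    have hpk : p = 2 * (k + 1) := by omega
    -- the real-valued cycle condition function
    set f : ℕ → ℝ := fun n => r₀ * a n + r₁ * a (n+1) + (a (n+2) : ℝ) with hf
    have hfmem : ∀ n, f n ∈ Set.Ico (0:ℝ) 1 := hmem
    -- g n = (-1)^n * a n, periodic
    set g : ℕ → ℝ := fun n => (-1:ℝ)^n * (a n : ℝ) with hg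
    have hpe2 : Even p := ⟨m0, hm0⟩
    have hgper : ∀ n, g (n + p) = g n := by
      intro n
      simp only [hg]
      rw [hper n, pow_add, hpe2.neg_one_pow, mul_one]
    have hgper' : ∀ n, g (n + p + 1) = g (n + 1) := by
      intro n
      have := hgper (n+1)
      rwa [show n+1+p = n+p+1 from by ring] at this
    have hshift1 : ∑ n ∈ Finset.range p, g (n+1) = ∑ n ∈ Finset.range p, g n :=
      sum_shift g p hgper
    have hshift2 : ∑ n ∈ Finset.range p, g (n+2) = ∑ n ∈ Finset.range p, g n := by
      have := sum_shift (fun n => g (n+1)) p hgper'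
      calc ∑ n ∈ Finset.range p, g (n+2) = ∑ n ∈ Finset.range p, g (n+1+1) := by
            apply Finset.sum_congr rfl; intro n _; ring_nf
        _ = ∑ n ∈ Finset.range p, g (n+1) := this
        _ = ∑ n ∈ Finset.range p, g n := hshift1
    set G : ℝ := ∑ n ∈ Finset.range p, g n with hG
    -- key identity
    have hkey : ∑ n ∈ Finset.range p, (-1:ℝ)^n * f n = s * G := by
      have : ∀ n, (-1:ℝ)^n * f n = r₀ * g n - r₁ * g (n+1) + g (n+2) := by
        intro n
        simp only [hf, hg, pow_succ]
        ring
      rw [Finset.sum_congr rfl (fun n _ => this n)]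
      rw [Finset.sum_add_distrib, Finset.sum_sub_distrib, ← Finset.mul_sum, ← Finset.mul_sum,
        hshift1, hshift2]
      rw [hs]; ring
    -- bound on the sum
    have hbound : |s * G| < (k:ℝ) + 1 := by
      rw [← hkey]
      have := sum_alt_bound f hfmem k
      rwa [← hpk] at this
    -- lower bound on |G|
    have hGbig : (p : ℝ) ≤ |G| := by
      rcases lt_or_gt_of_ne (hne 0) with h0 | h0
      · -- a 0 < 0 : each g n ≤ -1
        have hle : ∀ n ∈ Finset.range p, g n ≤ -1 := by
          intro n _
          have h1 := hsign n
          have h2 : ((-1:ℤ)^n * a n) < 0 := by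
            rcases lt_trichotomy ((-1:ℤ)^n * a n) 0 with h | h | h
            · exact h
            · rw [h] at h1; simp at h1
            · nlinarith
          have h3 : ((-1:ℤ)^n * a n) ≤ -1 := by omega
          have h4 : ((-1:ℝ))^n * (a n : ℝ) ≤ -1 := by exact_mod_cast h3
          simpa [hg] using h4
        have : G ≤ ∑ _n ∈ Finset.range p, (-1:ℝ) := Finset.sum_le_sum hle
        rw [Finset.sum_const, Finset.card_range, nsmul_eq_mul] at this
        have : G ≤ -(p:ℝ) := by linarith
        calc (p:ℝ) ≤ -G := by linarith
          _ ≤ |G| := neg_le_abs G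
      · -- a 0 > 0 : each g n ≥ 1
        have hle : ∀ n ∈ Finset.range p, (1:ℝ) ≤ g n := by
          intro n _
          have h1 := hsign n
          have h2 : 0 < ((-1:ℤ)^n * a n) := by
            rcases lt_trichotomy ((-1:ℤ)^n * a n) 0 with h | h | h
            · nlinarith
            · rw [h] at h1; simp at h1
            · exact h
          have h3 : (1:ℤ) ≤ ((-1:ℤ)^n * a n) := h2
          have h4 : (1:ℝ) ≤ ((-1:ℝ))^n * (a n : ℝ) := by exact_mod_cast h3
          simpa [hg] using h4
        have : ∑ _n ∈ Finset.range p, (1:ℝ) ≤ G := Finset.sum_le_sum hle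
        rw [Finset.sum_const, Finset.card_range, nsmul_eq_mul, mul_one] at this
        calc (p:ℝ) ≤ G := this
          _ ≤ |G| := le_abs_self G
    -- conclude
    rw [abs_mul] at hbound
    have hpR : (p:ℝ) = 2*((k:ℝ)+1) := by rw [hpk]; push_cast; ring
    by_contra hcon
    push_neg at hcon
    have h1 : (0:ℝ) ≤ |s| := abs_nonneg _
    have h2 : (0:ℝ) ≤ |G| := abs_nonneg _
    nlinarith [mul_le_mul hcon hGbig (by positivity : (0:ℝ) ≤ (p:ℝ)) h1]
  · constructor
    · rintro ⟨t, ht, ⟨_, _, hmem⟩⟩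
      have h0 := hmem 0
      have h1 := hmem 1
      simp only [Set.mem_Ico] at h0 h1
      norm_num at h0 h1
      have htR : (t:ℝ) ≠ 0 := Int.cast_ne_zero.mpr ht
      have hz : (t:ℝ) * (r₀ - r₁ + 1) = 0 := by nlinarith [h0.1, h0.2, h1.1, h1.2]
      rcases mul_eq_zero.mp hz with h | h
      · exact absurd h htR
      · exact h
    · intro hs
      refine ⟨1, one_ne_zero, two_pos, fun n => ?_, fun n => ?_⟩
      · simp [pow_add]
      · have : (r₀ * (((-1:ℤ))^n * 1 : ℤ) + r₁ * (((-1:ℤ))^(n+1) * 1 : ℤ) +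
            ((((-1:ℤ))^(n+2) * 1 : ℤ) : ℝ)) = ((-1:ℝ))^n * (r₀ - r₁ + 1) := by
          push_cast
          ring
        simp only [this, hs, mul_zero]
        exact ⟨le_refl 0, one_pos⟩
end

section
/- Let r₀, r₁ ∈ ℝ with r₀ > 0, r₁ ≤ -2√r₀, and r₀ + r₁ ≥ 0. Then every ultimately periodic orbit of the two-dimensional SRS map τ_{(r₀,r₁)} ends up in the trivial cycle (0), i.e., τ_{(r₀,r₁)} has no nontrivial cycle. -/
theorem stmt_13 (r₀ r₁ : ℝ) (h₀ : 0 < r₀) (h₁ : r₁ ≤ -2 * Real.sqrt r₀) (h₂ : 0 ≤ r₀ + r₁) :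
    ¬ ∃ (a : ℕ → ℤ) (p : ℕ), SRSCycle r₀ r₁ a p ∧ ∃ n, a n ≠ 0 := by
  rintro ⟨a, p, ⟨hp, hper, hε⟩, n₀, hn₀⟩
  set t := Real.sqrt r₀ with ht
  have ht0 : 0 < t := Real.sqrt_pos.mpr h₀
  have ht2 : t^2 = r₀ := Real.sq_sqrt h₀.le
  have hr4 : 4 ≤ r₀ := by nlinarith
  have hr1 : r₁ ≤ -4 := by nlinarith
  have hD : 0 ≤ r₁^2 - 4*r₀ := by nlinarith
  set s := Real.sqrt (r₁^2 - 4*r₀) with hs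
  have hs0 : 0 ≤ s := Real.sqrt_nonneg _
  have hs2 : s^2 = r₁^2 - 4*r₀ := Real.sq_sqrt hD
  set β := (-r₁ - s)/2 with hβ
  set α := (-r₁ + s)/2 with hα
  have hβ1 : 1 < β := by
    rw [hβ]
    nlinarith [mul_nonneg hs0 hs0]
  have hα1 : 1 < α := by
    have : β ≤ α := by rw [hα, hβ]; linarith
    linarith
  have hαβ : α * β = r₀ := by
    have h : α * β = (r₁^2 - s^2)/4 := by rw [hα, hβ]; ring
    rw [hs2] at h; linarith
  have hsum : α + β = -r₁ := by rw [hα, hβ]; ring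
  set b : ℕ → ℝ := fun n => (a (n+1) : ℝ) - β * a n with hbdef
  have hrec : ∀ n, b (n+1) = α * b n + (r₀ * a n + r₁ * a (n+1) + (a (n+2) : ℝ)) := by
    intro n
    show (a (n+2) : ℝ) - β * a (n+1) = α * ((a (n+1) : ℝ) - β * a n) + _
    linear_combination (a n : ℝ) * hαβ - (a (n+1) : ℝ) * hsum
  -- Step B: b n ≤ 0 for all n
  have hb : ∀ n, b n ≤ 0 := by
    intro N
    by_contra h
    push_neg at h
    have hmono : ∀ n, α * b n ≤ b (n+1) := fun n => by
      rw [hrec n]; linarith [(hε n).1]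
    have hgrow : ∀ k, α^k * b N ≤ b (N+k) := by
      intro k
      induction k with
      | zero => simp
      | succ k ih =>
        have h1 := hmono (N+k)
        have hαpos : (0:ℝ) ≤ α := by linarith
        calc α^(k+1) * b N = α * (α^k * b N) := by ring
          _ ≤ α * b (N+k) := by nlinarith
          _ ≤ b (N+k+1) := h1
    have hbp : b (N+p) = b N := by
      show (a (N+p+1) : ℝ) - β * a (N+p) = (a (N+1) : ℝ) - β * a N
      rw [show N+p+1 = (N+1)+p by omega, hper, hper]
    have hpow : 1 < α^p := one_lt_pow₀ hα1 hp.ne'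
    nlinarith [hgrow p]
  have hstep : ∀ n, (a (n+1) : ℝ) ≤ β * a n := by
    intro n; have := hb n; simp only [hbdef] at this; linarith
  -- Step C: all a n ≥ 0
  have hnn : ∀ n, 0 ≤ a n := by
    by_contra h
    push_neg at h
    obtain ⟨N, hN⟩ := h
    have hdec : ∀ k, a (N+k) ≤ a N - k := by
      intro k
      induction k with
      | zero => simp
      | succ k ih =>
        have hneg : a (N+k) < 0 := by omega
        have h1 : (a (N+k+1) : ℝ) ≤ β * a (N+k) := hstep (N+k)
        have h2 : β * (a (N+k) : ℝ) < a (N+k) := by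
          have : (a (N+k) : ℝ) < 0 := by exact_mod_cast hneg
          nlinarith
        have h3 : (a (N+k+1) : ℝ) < a (N+k) := by linarith
        have h4 : a (N+k+1) < a (N+k) := by exact_mod_cast h3
        have h5 : a (N+(k+1)) = a (N+k+1) := rfl
        omega
    have := hdec p
    have := hper N
    omega
  by_cases hall : ∀ m, 1 ≤ a m
  · -- sum argument
    set S : ℤ := ∑ n ∈ Finset.range p, a n with hSdef
    have hS0 : (0:ℤ) ≤ S := Finset.sum_nonneg (fun i _ => hnn i)
    have hSp : (p:ℤ) ≤ S := by
      calc (p:ℤ) = ∑ _n ∈ Finset.range p, (1:ℤ) := by simp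
        _ ≤ S := Finset.sum_le_sum (fun i _ => hall i)
    have hap : a p = a 0 := by simpa using hper 0
    have hap1 : a (p+1) = a 1 := by rw [show p+1 = 1+p by omega]; exact hper 1
    have hshift1 : ∑ n ∈ Finset.range p, a (n+1) = S := by
      have h1 := Finset.sum_range_succ' a p
      have h2 := Finset.sum_range_succ a p
      rw [h2] at h1
      rw [hap] at h1
      omega
    have hshift2 : ∑ n ∈ Finset.range p, a (n+2) = S := by
      have h1 := Finset.sum_range_succ' (fun n => a (n+1)) p
      have h2 := Finset.sum_range_succ (fun n => a (n+1)) p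
      rw [h2] at h1
      rw [hap1, hshift1] at h1
      have hr : ∑ n ∈ Finset.range p, a (n+2) = ∑ n ∈ Finset.range p, a (n+1+1) := by
        apply Finset.sum_congr rfl
        intro i _
        congr 1
      linarith [h1, hr]
    have hsum_eps : ∑ n ∈ Finset.range p, (r₀ * a n + r₁ * a (n+1) + (a (n+2) : ℝ))
        = (r₀ + r₁ + 1) * S := by
      rw [Finset.sum_add_distrib, Finset.sum_add_distrib, ← Finset.mul_sum, ← Finset.mul_sum]
      have c1 : ∑ n ∈ Finset.range p, ((a n : ℝ)) = (S:ℝ) := by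
        rw [hSdef]; push_cast; ring
      have c2 : ∑ n ∈ Finset.range p, ((a (n+1) : ℝ)) = (S:ℝ) := by
        rw [← hshift1]; push_cast; ring
      have c3 : ∑ n ∈ Finset.range p, ((a (n+2) : ℝ)) = (S:ℝ) := by
        rw [← hshift2]; push_cast; ring
      rw [c1, c2, c3]; ring
    have hub : ∑ n ∈ Finset.range p, (r₀ * a n + r₁ * a (n+1) + (a (n+2) : ℝ)) < p := by
      calc ∑ n ∈ Finset.range p, (r₀ * a n + r₁ * a (n+1) + (a (n+2) : ℝ))
          < ∑ _n ∈ Finset.range p, (1:ℝ) :=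
            Finset.sum_lt_sum_of_nonempty (Finset.nonempty_range_iff.mpr hp.ne')
              (fun i _ => (hε i).2)
        _ = p := by simp
    rw [hsum_eps] at hub
    have hSpr : (p:ℝ) ≤ (S:ℝ) := by exact_mod_cast hSp
    have hS0r : (0:ℝ) ≤ (S:ℝ) := by exact_mod_cast hS0
    nlinarith [mul_nonneg h₂ hS0r]
  · push_neg at hall
    obtain ⟨m, hm⟩ := hall
    have hm0 : a m = 0 := by have := hnn m; omega
    have hzero : ∀ k, a (m+k) = 0 := by
      intro k
      induction k with
      | zero => simpa using hm0
      | succ k ih =>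
        have h1 : (a (m+k+1) : ℝ) ≤ β * a (m+k) := hstep (m+k)
        rw [ih] at h1
        simp at h1
        have h6 := hnn (m+k+1)
        have h7 : a (m+(k+1)) = a (m+k+1) := rfl
        omega
    have hshiftk : ∀ k n, a (n + k*p) = a n := by
      intro k
      induction k with
      | zero => simp
      | succ k ih =>
        intro n
        rw [show n + (k+1)*p = (n + k*p) + p by ring, hper, ih]
    have hle : m ≤ m * p := Nat.le_mul_of_pos_right m hp
    have : a n₀ = 0 := by
      rw [← hshiftk m n₀, show n₀ + m*p = m + (n₀ + m*p - m) by omega]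
      exact hzero _
    exact hn₀ this
end

section
/- Let r₀, r₁ ∈ ℝ with r₀ + r₁ ≤ -2 and r₀ - r₁ ≠ -1, and suppose it is not the case that both r₀ > -2 and r₁ > -1. Then τ_{(r₀,r₁)} has no nontrivial cycle. -/
set_option maxHeartbeats 1000000 in
theorem stmt_14 (r₀ r₁ : ℝ) (h₀ : r₀ + r₁ ≤ -2) (h₁ : r₀ - r₁ ≠ -1) (h₂ : ¬ (-2 < r₀ ∧ -1 < r₁)) :
    ¬ ∃ (a : ℕ → ℤ) (p : ℕ), SRSCycle r₀ r₁ a p ∧ ∃ n, a n ≠ 0 := by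
  rintro ⟨a, p, hcyc, j0, hj0⟩
  obtain ⟨hp, hper, hε⟩ : 0 < p ∧ (∀ n : ℕ, a (n + p) = a n) ∧
      ∀ n : ℕ, (r₀ * a n + r₁ * a (n + 1) + (a (n + 2) : ℝ)) ∈ Set.Ico (0 : ℝ) 1 := hcyc
  have hε0 : ∀ n, (0:ℝ) ≤ r₀ * a n + r₁ * a (n+1) + (a (n+2) : ℝ) :=
    fun n => (Set.mem_Ico.mp (hε n)).1
  have hε1 : ∀ n, r₀ * a n + r₁ * a (n+1) + (a (n+2) : ℝ) < 1 :=
    fun n => (Set.mem_Ico.mp (hε n)).2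
  have hperk : ∀ k n, a (n + k * p) = a n := by
    intro k
    induction k with
    | zero => intro n; simp
    | succ k ih =>
      intro n
      rw [show n + (k+1)*p = (n + k * p) + p by ring, hper, ih]
  have hmod : ∀ n, a n = a (n % p) := by
    intro n
    conv_lhs => rw [show n = n % p + (n / p) * p from (Nat.mod_add_div' n p).symm]
    rw [hperk]
  -- discriminant and roots
  have hd0 : (0:ℝ) ≤ r₁^2 - 4*r₀ := by nlinarith [sq_nonneg (r₁ + 2)]
  obtain ⟨sq, hsqdef⟩ : ∃ x : ℝ, x = Real.sqrt (r₁^2 - 4*r₀) := ⟨_, rfl⟩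
  have hsq0 : 0 ≤ sq := hsqdef ▸ Real.sqrt_nonneg _
  have hsqsq : sq^2 = r₁^2 - 4*r₀ := by rw [hsqdef]; exact Real.sq_sqrt hd0
  have hsq2 : 2 ≤ sq := by
    by_contra h
    push_neg at h
    nlinarith [sq_nonneg (r₁ + 2)]
  obtain ⟨l, hldef⟩ : ∃ x : ℝ, x = (-r₁ - sq)/2 := ⟨_, rfl⟩
  obtain ⟨u, hudef⟩ : ∃ x : ℝ, x = (-r₁ + sq)/2 := ⟨_, rfl⟩
  have hsum : l + u = -r₁ := by rw [hldef, hudef]; ring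
  have hprod : l * u = r₀ := by
    rw [hldef, hudef]
    linear_combination (-(1:ℝ)/4) * hsqsq
  have huv : 1 ≤ (u - 1) * (1 - l) := by
    have h : (u - 1) * (1 - l) = -r₁ - r₀ - 1 := by linear_combination hsum - hprod
    linarith
  have hsum2 : (u - 1) + (1 - l) = sq := by rw [hldef, hudef]; ring
  have hu1 : 1 < u := by
    by_contra h
    push_neg at h
    have h1 : 2 - (u-1) ≤ 1 - l := by linarith
    nlinarith
  have hl1 : l < 1 := by nlinarith
  have hu0 : (0:ℝ) < u - 1 := by linarith
  -- the spectral sequence s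
  obtain ⟨s, hsdef⟩ : ∃ f : ℕ → ℝ, f = fun n => (a (n+1) : ℝ) - l * a n := ⟨_, rfl⟩
  have hrec : ∀ n, s (n+1) = u * s n + (r₀ * a n + r₁ * a (n+1) + (a (n+2):ℝ)) := by
    intro n
    simp only [hsdef]
    push_cast
    linear_combination (-(a (n+1):ℝ)) * hsum + (a n : ℝ) * hprod
  have hsper : ∀ n, s (n + p) = s n := by
    intro n
    simp only [hsdef]
    rw [show n + p + 1 = (n+1) + p by ring, hper, hper]
  have hs0 : ∀ n, s n ≤ 0 := by
    by_contra hcon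
    push_neg at hcon
    obtain ⟨N, hN⟩ := hcon
    have key : ∀ k, s N ≤ s (N + k) := by
      intro k
      induction k with
      | zero => simp
      | succ k ih =>
        have h2 := hrec (N + k)
        have h3 := hε0 (N + k)
        show s N ≤ s (N + k + 1)
        nlinarith [mul_le_mul_of_nonneg_left ih (by linarith : (0:ℝ) ≤ u)]
    obtain ⟨q, hq⟩ : ∃ q, p = q + 1 := ⟨p - 1, by omega⟩
    have h1 := key q
    have h2 := hrec (N + q)
    have h3 := hε0 (N + q)
    have h4 : s (N + q + 1) = s N := by
      rw [show N + q + 1 = N + p by omega]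
      exact hsper N
    nlinarith [mul_le_mul_of_nonneg_left h1 (by linarith : (0:ℝ) ≤ u),
      mul_pos hu0 hN]
  have hgap : ∀ n, (u - 1) * (l * a n - a (n+1)) < 1 := by
    by_contra hcon
    push_neg at hcon
    obtain ⟨N, hN⟩ := hcon
    have key : ∀ k, s (N + k) ≤ s N ∧ 1 ≤ (u - 1) * (- s (N + k)) := by
      intro k
      induction k with
      | zero =>
        refine ⟨by simp, ?_⟩
        simpa [hsdef, neg_sub] using hN
      | succ k ih =>
        obtain ⟨ih1, ih2⟩ := ih
        have h2 := hrec (N + k)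
        have h3 := hε1 (N + k)
        have h5 : s (N + k + 1) < s (N + k) := by nlinarith [ih2]
        refine ⟨?_, ?_⟩
        · show s (N + k + 1) ≤ s N; linarith
        · show 1 ≤ (u - 1) * (- s (N + k + 1))
          nlinarith [mul_le_mul_of_nonneg_left (le_of_lt h5) (le_of_lt hu0), ih2]
    obtain ⟨q, hq⟩ : ∃ q, p = q + 1 := ⟨p - 1, by omega⟩
    obtain ⟨k1, k2⟩ := key q
    have h2 := hrec (N + q)
    have h3 := hε1 (N + q)
    have h4 : s (N + q + 1) = s N := by
      rw [show N + q + 1 = N + p by omega]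
      exact hsper N
    nlinarith [k1, k2, h2, h3, h4]
  have hle : ∀ n, (a (n+1) : ℝ) ≤ l * a n := by
    intro n
    have := hs0 n
    simp only [hsdef] at this
    linarith
  have hgapR : ∀ n, (u - 1) * (l * a n - a (n+1)) < 1 := hgap
  -- max and min over one period
  have hpne : (Finset.range p).Nonempty := ⟨0, Finset.mem_range.mpr hp⟩
  obtain ⟨M, hMdef⟩ : ∃ x : ℤ, x = (Finset.range p).sup' hpne a := ⟨_, rfl⟩
  obtain ⟨m, hmdef⟩ : ∃ x : ℤ, x = (Finset.range p).inf' hpne a := ⟨_, rfl⟩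
  have hM : ∀ n, a n ≤ M := by
    intro n
    rw [hmod n, hMdef]
    exact Finset.le_sup' a (Finset.mem_range.mpr (Nat.mod_lt n hp))
  have hm : ∀ n, m ≤ a n := by
    intro n
    rw [hmod n, hmdef]
    exact Finset.inf'_le a (Finset.mem_range.mpr (Nat.mod_lt n hp))
  have hMR : ∀ n, (a n : ℝ) ≤ (M:ℝ) := fun n => by exact_mod_cast hM n
  have hmR : ∀ n, (m:ℝ) ≤ (a n : ℝ) := fun n => by exact_mod_cast hm n
  obtain ⟨iM, _, hiM⟩ : ∃ i ∈ Finset.range p, (Finset.range p).sup' hpne a = a i :=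
    Finset.exists_mem_eq_sup' hpne a
  obtain ⟨im, _, him⟩ : ∃ i ∈ Finset.range p, (Finset.range p).inf' hpne a = a i :=
    Finset.exists_mem_eq_inf' hpne a
  rw [← hMdef] at hiM
  rw [← hmdef] at him
  -- Endgame A : values in {-1, 0} leads to contradiction
  have endA : (∀ n, -1 ≤ a n ∧ a n ≤ 0) → False := by
    intro hr
    have hj : a j0 = -1 := by have := hr j0; omega
    have hno : ∀ n, a n = -1 → a (n+1) = -1 → False := by
      intro n e1 e2
      have e := hε1 n
      rw [e1, e2] at e
      have h3 : (-1:ℝ) ≤ (a (n+2) : ℝ) := by exact_mod_cast (hr (n+2)).1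
      push_cast at e
      linarith
    obtain ⟨N1, hN1⟩ : ∃ N1, j0 + 1 * p = N1 + 1 := ⟨j0 + 1*p - 1, by omega⟩
    have hN : a (N1 + 1) = -1 := by rw [← hN1, hperk]; exact hj
    have hpred0 : a N1 = 0 := by
      by_contra h
      have : a N1 = -1 := by have := hr N1; omega
      exact hno N1 this hN
    have hsucc0 : a (N1 + 2) = 0 := by
      by_contra h
      have h' : a (N1+2) = -1 := by have := hr (N1+2); omega
      exact hno (N1+1) hN h'
    have e1 := hε1 N1
    rw [hpred0, hN, hsucc0] at e1
    push_cast at e1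
    have e2 := hε1 (N1+1)
    rw [show N1+1+1 = N1+2 by omega, show N1+1+2 = N1+3 by omega] at e2
    rw [hN, hsucc0] at e2
    have h3 : (-1:ℝ) ≤ (a (N1+3) : ℝ) := by exact_mod_cast (hr (N1+3)).1
    push_cast at e2
    exact h₂ ⟨by linarith, by linarith⟩
  -- l is not -1
  have hlm1 : l ≠ -1 := by
    intro h
    apply h₁
    have he : (1 + l) * (1 + u) = r₀ - r₁ + 1 := by linear_combination hsum + hprod
    rw [h] at he
    linarith [he]
  rcases le_or_gt 0 l with hl0 | hlneg
  · -- Case (i) : 0 ≤ l < 1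
    have hM0 : M ≤ 0 := by
      by_contra hMpos
      push_neg at hMpos
      have hM1R : (1:ℝ) ≤ (M:ℝ) := by exact_mod_cast hMpos
      obtain ⟨N1, hN1⟩ : ∃ N1, iM + 1 * p = N1 + 1 := ⟨iM + 1*p - 1, by omega⟩
      have hNv : a (N1+1) = M := by rw [← hN1, hperk]; exact hiM.symm
      have h1 := hle N1
      rw [hNv] at h1
      have h2 : l * (a N1 : ℝ) ≤ l * (M:ℝ) := mul_le_mul_of_nonneg_left (hMR N1) hl0
      nlinarith [mul_pos (show (0:ℝ) < 1 - l by linarith) (show (0:ℝ) < (M:ℝ) by linarith)]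
    have hm1 : -1 ≤ m := by
      by_contra hmc
      push_neg at hmc
      have hm2 : m ≤ -2 := by omega
      have hm2R : (m:ℝ) ≤ -2 := by exact_mod_cast hm2
      obtain ⟨K1, hK1⟩ : ∃ K1, im + 1 * p = K1 + 1 := ⟨im + 1*p - 1, by omega⟩
      have hKv : a (K1+1) = m := by rw [← hK1, hperk]; exact him.symm
      have g := hgap K1
      rw [hKv] at g
      have h2 : l * (m : ℝ) ≤ l * (a K1 : ℝ) := mul_le_mul_of_nonneg_left (hmR K1) hl0
      have h3 : (u-1) * (l * (m:ℝ) - (m:ℝ)) < 1 := by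
        nlinarith [mul_le_mul_of_nonneg_left (show l * (m:ℝ) - (m:ℝ) ≤ l * (a K1:ℝ) - (m:ℝ) by linarith) (le_of_lt hu0)]
      have h4 : (1 - l) * 2 ≤ (1 - l) * (-(m:ℝ)) :=
        mul_le_mul_of_nonneg_left (by linarith) (by linarith)
      nlinarith [mul_le_mul_of_nonneg_left h4 (le_of_lt hu0), huv]
    exact endA (fun n => ⟨by have := hm n; omega, by have := hM n; omega⟩)
  · rcases lt_or_ge l (-1) with hlt | hge
    · -- Case (iii) : l < -1
      rcases le_or_gt M 0 with hM0 | hMpos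
      · -- all values ≤ 0 ⇒ values in {-1,0}
        have hm1 : -1 ≤ m := by
          by_contra hmc
          push_neg at hmc
          have hm2R : (m:ℝ) ≤ -2 := by exact_mod_cast (show m ≤ -2 by omega)
          have g := hgap im
          rw [← him] at g
          have h2 : l * (-2:ℝ) ≤ l * (m:ℝ) :=
            mul_le_mul_of_nonpos_left hm2R (by linarith)
          have h3 : (a (im+1) : ℝ) ≤ 0 := by exact_mod_cast le_trans (hM (im+1)) hM0
          linarith [mul_le_mul_of_nonneg_left
            (show (-l)*2 ≤ l*(m:ℝ) - (a (im+1):ℝ) by linarith) (le_of_lt hu0), huv,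
            mul_pos hu0 (show (0:ℝ) < -l-1 by linarith)]
        exact endA (fun n => ⟨by have := hm n; omega, by have := hM n; omega⟩)
      · -- M ≥ 1
        have hM1R : (1:ℝ) ≤ (M:ℝ) := by exact_mod_cast hMpos
        have haN : a iM = M := hiM.symm
        have h1 := hle iM
        rw [haN] at h1
        have hstep1 : a (iM+1) ≤ -(M+1) := by
          have h2 : (a (iM+1):ℝ) < -(M:ℝ) := by
            linarith [mul_pos (show (0:ℝ) < -l-1 by linarith) (show (0:ℝ) < (M:ℝ) by linarith)]
          have h3 : a (iM+1) < -M := by exact_mod_cast h2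
          omega
        have hstep1R : (a (iM+1):ℝ) ≤ -((M:ℝ)+1) := by exact_mod_cast hstep1
        have g2 := hgap (iM+1)
        have hml : l * (-((M:ℝ)+1)) ≤ l * (a (iM+1):ℝ) :=
          mul_le_mul_of_nonpos_left hstep1R (by linarith)
        have hy : (a (iM+1+1) : ℝ) ≤ (M:ℝ) := hMR _
        have hkey : (u-1) * ((-l)*((M:ℝ)+1) - (M:ℝ)) < 1 := by
          linarith [mul_le_mul_of_nonneg_left
            (show (-l)*((M:ℝ)+1) - (M:ℝ) ≤ l * (a (iM+1):ℝ) - (a (iM+1+1):ℝ) by linarith)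
            (le_of_lt hu0)]
        have hMnl : (0:ℝ) ≤ (M:ℝ)*(-l-1) := mul_nonneg (by linarith) (by linarith)
        have hwu : (u-1)*(-l) < 1 := by
          linarith [mul_le_mul_of_nonneg_left
            (show (-l) ≤ (-l)*((M:ℝ)+1) - (M:ℝ) by linarith) (le_of_lt hu0)]
        have hr1gt : -1 < r₁ := by
          have huw : u ≤ u * (-l) := by
            linarith [mul_pos (show (0:ℝ) < u by linarith) (show (0:ℝ) < -l-1 by linarith)]
          have hlu : l + u < 1 := by linarith [huw, hwu]
          linarith [hsum]
        have hr0le : r₀ ≤ -2 := by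
          by_contra h
          exact h₂ ⟨not_le.mp h, hr1gt⟩
        have hul2 : l * u ≤ -2 := by rw [hprod]; exact hr0le
        have hI : (M:ℝ)*(-l-1) < 1 := by
          have h5 : (u-1) * ((-l)*((M:ℝ)+1) - (M:ℝ)) < (u-1)*(1-l) := by linarith
          have h6 := lt_of_mul_lt_mul_left h5 (le_of_lt hu0)
          linarith [h6]
        have hXpos : (0:ℝ) < (-l)*((M:ℝ)+1) - (M:ℝ) := by linarith [hMnl]
        have hII : (M:ℝ)*(2+l) < -l := by
          have h5 : (2 - (-l)) ≤ (-l)*(u-1) := by linarith [hul2]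
          have h6 : (2 - (-l)) * ((-l)*((M:ℝ)+1) - (M:ℝ)) ≤ ((-l)*(u-1)) * ((-l)*((M:ℝ)+1) - (M:ℝ)) :=
            mul_le_mul_of_nonneg_right h5 (le_of_lt hXpos)
          have h7 : ((-l)*(u-1)) * ((-l)*((M:ℝ)+1) - (M:ℝ)) < (-l) * 1 := by
            linarith [mul_lt_mul_of_pos_left hkey (show (0:ℝ) < -l by linarith)]
          have h8 : (-l-1) * ((M:ℝ)*(2+l)) < (-l-1) * (-l) := by linarith [h6, h7]
          exact lt_of_mul_lt_mul_left h8 (by linarith)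
        have hM2 : M ≤ 2 := by
          by_contra h
          push_neg at h
          have h3R : (3:ℝ) ≤ (M:ℝ) := by exact_mod_cast h
          have e1 : 3*(-l-1) ≤ (M:ℝ)*(-l-1) := mul_le_mul_of_nonneg_right h3R (by linarith)
          have e1b : -l < 4/3 := by linarith
          have e2 : 3*(2+l) ≤ (M:ℝ)*(2+l) := mul_le_mul_of_nonneg_right h3R (by linarith)
          linarith
        have hM12 : M = 1 ∨ M = 2 := by omega
        rcases hM12 with hMv | hMv
        · -- M = 1
          rw [hMv] at hstep1
          have hmge : -3 < m := by
            by_contra hmc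
            push_neg at hmc
            have hmcR : (m:ℝ) ≤ -3 := by exact_mod_cast hmc
            have g3 := hgap im
            rw [← him] at g3
            have hlm : (-l)*3 ≤ l * (m:ℝ) := by
              linarith [mul_le_mul_of_nonpos_left hmcR (show l ≤ 0 by linarith)]
            have hup : (a (im+1):ℝ) ≤ (M:ℝ) := hMR _
            rw [hMv] at hup
            push_cast at hup
            linarith [mul_le_mul_of_nonneg_left
              (show 3*(-l) - 1 ≤ l*(m:ℝ) - (a (im+1):ℝ) by linarith) (le_of_lt hu0), huv,
              mul_pos hu0 (show (0:ℝ) < -l-1 by linarith)]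
          have haN1 : a (iM+1) = -2 := by have := hm (iM+1); omega
          have hmm : m = -2 := by have := hm (iM+1); omega
          have haN2 : a (iM+1+1) = 1 := by
            have g4 := hgap (iM+1)
            rw [haN1] at g4
            push_cast at g4
            have hub : a (iM+1+1) ≤ 1 := by have := hM (iM+1+1); omega
            by_contra hc
            have hc2 : a (iM+1+1) ≤ 0 := by omega
            have hc2R : (a (iM+1+1):ℝ) ≤ 0 := by exact_mod_cast hc2
            linarith [mul_le_mul_of_nonneg_left
              (show (-l)*2 ≤ l*(-2:ℝ) - (a (iM+1+1):ℝ) by linarith) (le_of_lt hu0), huv,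
              mul_pos hu0 (show (0:ℝ) < -l-1 by linarith)]
          have haN3 : a (iM+1+1+1) = -2 := by
            have h5 := hle (iM+1+1)
            rw [haN2] at h5
            push_cast at h5
            have h6 : (a (iM+1+1+1):ℝ) < -1 := by linarith
            have h7 : a (iM+1+1+1) < -1 := by exact_mod_cast h6
            have := hm (iM+1+1+1)
            omega
          rw [show iM + 1 + 1 = iM + 2 by omega] at haN2
          rw [show iM + 1 + 1 + 1 = iM + 3 by omega] at haN3
          have haNM : a iM = 1 := by rw [haN, hMv]
          have e1 := hε1 iM
          rw [haNM, haN1, haN2] at e1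
          push_cast at e1
          have e2 := hε1 (iM+1)
          rw [show iM+1+1 = iM+2 by omega, show iM+1+2 = iM+3 by omega] at e2
          rw [haN1, haN2, haN3] at e2
          push_cast at e2
          linarith
        · -- M = 2
          rw [hMv] at hstep1
          rw [hMv] at hI hII
          push_cast at hI hII
          have hmge : -4 < m := by
            by_contra hmc
            push_neg at hmc
            have hmcR : (m:ℝ) ≤ -4 := by exact_mod_cast hmc
            have g3 := hgap im
            rw [← him] at g3
            have hup : (a (im+1):ℝ) ≤ (M:ℝ) := hMR _
            rw [hMv] at hup
            push_cast at hup
            have hlm : (-l)*4 ≤ l * (m:ℝ) := by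
              linarith [mul_le_mul_of_nonpos_left hmcR (show l ≤ 0 by linarith)]
            linarith [mul_le_mul_of_nonneg_left
              (show 4*(-l) - 2 ≤ l*(m:ℝ) - (a (im+1):ℝ) by linarith) (le_of_lt hu0), huv,
              mul_pos hu0 (show (0:ℝ) < -l-1 by linarith)]
          have haN1 : a (iM+1) = -3 := by have := hm (iM+1); omega
          have hmm : m = -3 := by have := hm (iM+1); omega
          have haN2 : a (iM+1+1) = 2 := by
            have g4 := hgap (iM+1)
            rw [haN1] at g4
            push_cast at g4
            have hub : a (iM+1+1) ≤ 2 := by have := hM (iM+1+1); omega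
            by_contra hc
            have hc2 : a (iM+1+1) ≤ 1 := by omega
            have hc2R : (a (iM+1+1):ℝ) ≤ 1 := by exact_mod_cast hc2
            linarith [mul_le_mul_of_nonneg_left
              (show (-l)*3 - 1 ≤ l*(-3:ℝ) - (a (iM+1+1):ℝ) by linarith) (le_of_lt hu0), huv,
              mul_pos hu0 (show (0:ℝ) < -l-1 by linarith)]
          have haN3 : a (iM+1+1+1) = -3 := by
            have h5 := hle (iM+1+1)
            rw [haN2] at h5
            push_cast at h5
            have h6 : (a (iM+1+1+1):ℝ) < -2 := by linarith
            have h7 : a (iM+1+1+1) < -2 := by exact_mod_cast h6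
            have := hm (iM+1+1+1)
            omega
          rw [show iM + 1 + 1 = iM + 2 by omega] at haN2
          rw [show iM + 1 + 1 + 1 = iM + 3 by omega] at haN3
          have haNM : a iM = 2 := by rw [haN, hMv]
          have e1 := hε1 iM
          rw [haNM, haN1, haN2] at e1
          push_cast at e1
          have e2 := hε1 (iM+1)
          rw [show iM+1+1 = iM+2 by omega, show iM+1+2 = iM+3 by omega] at e2
          rw [haN1, haN2, haN3] at e2
          push_cast at e2
          linarith
    · -- Case (ii) : -1 < l < 0
      have hlgt : -1 < l := lt_of_le_of_ne hge (Ne.symm hlm1)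
      rcases le_or_gt M 0 with hM0 | hMpos
      · have hm1 : -1 ≤ m := by
          by_contra hmc
          push_neg at hmc
          have hm2R : (m:ℝ) ≤ -2 := by exact_mod_cast (show m ≤ -2 by omega)
          obtain ⟨K1, hK1⟩ : ∃ K1, im + 1 * p = K1 + 1 := ⟨im + 1*p - 1, by omega⟩
          have hKv : a (K1+1) = m := by rw [← hK1, hperk]; exact him.symm
          have g := hgap K1
          rw [hKv] at g
          have h3 : (a K1 : ℝ) ≤ 0 := by exact_mod_cast le_trans (hM K1) hM0
          have h4 : 0 ≤ l * (a K1:ℝ) := by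
            linarith [mul_nonneg (show (0:ℝ) ≤ -l by linarith) (show (0:ℝ) ≤ -(a K1:ℝ) by linarith)]
          linarith [mul_le_mul_of_nonneg_left
            (show (2:ℝ) ≤ l * (a K1:ℝ) - (m:ℝ) by linarith) (le_of_lt hu0), huv,
            mul_pos hu0 (show (0:ℝ) < 1+l by linarith)]
        exact endA (fun n => ⟨by have := hm n; omega, by have := hM n; omega⟩)
      · have hM1R : (1:ℝ) ≤ (M:ℝ) := by exact_mod_cast hMpos
        obtain ⟨N1, hN1⟩ : ∃ N1, iM + 1 * p = N1 + 1 := ⟨iM + 1*p - 1, by omega⟩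
        have hNv : a (N1+1) = M := by rw [← hN1, hperk]; exact hiM.symm
        have h1 := hle N1
        rw [hNv] at h1
        have hpredm : a N1 ≤ -(M+1) := by
          by_contra hc
          push_neg at hc
          have hcR : -(M:ℝ) ≤ (a N1:ℝ) := by exact_mod_cast (show -M ≤ a N1 by omega)
          have h2 : l * (a N1:ℝ) ≤ l * (-(M:ℝ)) := mul_le_mul_of_nonpos_left hcR (by linarith)
          linarith [mul_pos (show (0:ℝ) < 1+l by linarith) (show (0:ℝ) < (M:ℝ) by linarith)]
        obtain ⟨K1, hK1⟩ : ∃ K1, im + 1 * p = K1 + 1 := ⟨im + 1*p - 1, by omega⟩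
        have hKv : a (K1+1) = m := by rw [← hK1, hperk]; exact him.symm
        have g := hgap K1
        rw [hKv] at g
        have h2 : l * (M:ℝ) ≤ l * (a K1:ℝ) := mul_le_mul_of_nonpos_left (hMR K1) (by linarith)
        have hstar : (u-1) * (l * (M:ℝ) - (m:ℝ)) < 1 := by
          linarith [mul_le_mul_of_nonneg_left
            (show l*(M:ℝ) - (m:ℝ) ≤ l * (a K1:ℝ) - (m:ℝ) by linarith) (le_of_lt hu0)]
        have hmlt : m ≤ -(M+1) := le_trans (hm N1) hpredm
        have hmltR : (m:ℝ) ≤ -((M:ℝ)+1) := by exact_mod_cast hmlt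
        have hA : (u-1) * ((1+l)*(M:ℝ) + 1) < 1 := by
          linarith [mul_le_mul_of_nonneg_left
            (show (1+l)*(M:ℝ)+1 ≤ l*(M:ℝ) - (m:ℝ) by linarith) (le_of_lt hu0)]
        have hr1le : r₁ ≤ -1 := by
          by_contra hr1c
          push_neg at hr1c
          have hr0le : r₀ ≤ -2 := by by_contra h; exact h₂ ⟨not_le.mp h, hr1c⟩
          have hul2 : l * u ≤ -2 := by rw [hprod]; exact hr0le
          have hu2 : 2 < u := by
            linarith [mul_pos (show (0:ℝ) < u by linarith) (show (0:ℝ) < 1+l by linarith)]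
          linarith [hA, mul_pos (show (0:ℝ) < u - 2 by linarith)
            (mul_pos (show (0:ℝ) < 1+l by linarith) (show (0:ℝ) < (M:ℝ) by linarith)),
            mul_pos (show (0:ℝ) < 1+l by linarith) (show (0:ℝ) < (M:ℝ) by linarith)]
        have hB : -l ≤ u - 1 := by
          have h5 : 1 ≤ l + u := by linarith [hsum]
          linarith
        have hA2 : (1+l)*(M:ℝ) < -l := by
          have h5 : (u-1) * ((1+l)*(M:ℝ)+1) < (u-1)*(1-l) := by linarith
          have h6 := lt_of_mul_lt_mul_left h5 (le_of_lt hu0)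
          linarith
        have hXpos : (0:ℝ) < (1+l)*(M:ℝ) + 1 := by
          linarith [mul_pos (show (0:ℝ) < 1+l by linarith) (show (0:ℝ) < (M:ℝ) by linarith)]
        have hA1 : (-l) * ((1+l)*(M:ℝ) + 1) < 1 := by
          linarith [mul_le_mul_of_nonneg_right hB (le_of_lt hXpos)]
        have hMeq : M = 1 := by
          by_contra hc
          have hc2 : 2 ≤ M := by omega
          have hc2R : (2:ℝ) ≤ (M:ℝ) := by exact_mod_cast hc2
          have e1 : (1+l)*2 ≤ (1+l)*(M:ℝ) := mul_le_mul_of_nonneg_left hc2R (by linarith)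
          have e2 : (2:ℝ)/3 < -l := by linarith
          linarith [mul_le_mul_of_nonneg_left e1 (show (0:ℝ) ≤ -l by linarith),
            mul_pos (show (0:ℝ) < -l - 1/2 by linarith) (show (0:ℝ) < 1+l by linarith)]
        rw [hMeq] at hstar hA2
        push_cast at hstar hA2
        have hw12 : l < -1/2 := by linarith
        have hmub : m ≤ -2 := by have := hm N1; omega
        have hmlb : m = -2 := by
          by_contra hc
          have hc3 : m ≤ -3 := by omega
          have hc3R : (m:ℝ) ≤ -3 := by exact_mod_cast hc3
          linarith [mul_le_mul_of_nonneg_left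
            (show (3:ℝ)+l ≤ l*1 - (m:ℝ) by linarith) (le_of_lt hu0),
            mul_le_mul_of_nonneg_right hB (show (0:ℝ) ≤ 3+l by linarith),
            mul_pos (show (0:ℝ) < -l-1/2 by linarith) (show (0:ℝ) < 1+l by linarith)]
        have hpred1 : ∀ n, a (n+1) = 1 → a n = -2 := by
          intro n hn
          have h5 := hle n
          rw [hn] at h5
          push_cast at h5
          have h6 : a n ≤ -2 := by
            by_contra hc
            have hc2R : (-1:ℝ) ≤ (a n:ℝ) := by exact_mod_cast (show (-1:ℤ) ≤ a n by omega)
            have h7 := mul_le_mul_of_nonpos_left hc2R (show l ≤ 0 by linarith)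
            linarith
          have := hm n
          omega
        have hpred2 : ∀ n, a (n+1) = -2 → a n = 1 := by
          intro n hn
          have g5 := hgap n
          rw [hn] at g5
          push_cast at g5
          have h6 : 1 ≤ a n := by
            by_contra hc
            have hc2R : (a n:ℝ) ≤ 0 := by exact_mod_cast (show a n ≤ (0:ℤ) by omega)
            have h7 : 0 ≤ l * (a n:ℝ) := by
              linarith [mul_nonneg (show (0:ℝ) ≤ -l by linarith) (show (0:ℝ) ≤ -(a n:ℝ) by linarith)]
            linarith [mul_le_mul_of_nonneg_left
              (show (2:ℝ) ≤ l*(a n:ℝ) + 2 by linarith) (le_of_lt hu0), hB, hw12]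
          have := hM n
          omega
        obtain ⟨N3, hN3⟩ : ∃ q, iM + 3 * p = q + 3 := ⟨iM + 3*p - 3, by omega⟩
        have hv3 : a (N3 + 3) = 1 := by
          rw [← hN3, hperk, ← hiM]
          exact hMeq
        have hv2 : a (N3 + 2) = -2 := hpred1 (N3+2) hv3
        have hv1 : a (N3 + 1) = 1 := hpred2 (N3+1) hv2
        have hv0 : a N3 = -2 := hpred1 N3 hv1
        have e1 := hε1 (N3+1)
        rw [show N3+1+1 = N3+2 by omega, show N3+1+2 = N3+3 by omega] at e1
        rw [hv1, hv2, hv3] at e1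
        push_cast at e1
        have e2 := hε1 N3
        rw [hv0, hv1, hv2] at e2
        push_cast at e2
        linarith
end

section
/- Let r₀, r₁ ∈ ℝ with r₀ + r₁ ≥ 0, r₀ < 0, and r₁ ≥ 1. Then τ_{(r₀,r₁)} has no nontrivial cycle. -/
theorem stmt_15 (r₀ r₁ : ℝ) (h₀ : 0 ≤ r₀ + r₁) (h₁ : r₀ < 0) (h₂ : 1 ≤ r₁) :
    ¬ ∃ (a : ℕ → ℤ) (p : ℕ), SRSCycle r₀ r₁ a p ∧ ∃ n, a n ≠ 0 := by
  rintro ⟨a, p, ⟨hp, hper, hε⟩, n₀, hn₀⟩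
  have hεlo : ∀ n, (0:ℝ) ≤ r₀ * a n + r₁ * a (n+1) + a (n+2) := fun n => (hε n).1
  have hεhi : ∀ n, r₀ * a n + r₁ * a (n+1) + (a (n+2):ℝ) < 1 := fun n => (hε n).2
  -- periodicity: a n = a (n % p)
  have hmod : ∀ n, a n = a (n % p) := by
    intro n
    induction n using Nat.strong_induction_on with
    | _ n ih =>
      rcases lt_or_ge n p with h | h
      · rw [Nat.mod_eq_of_lt h]
      · have h1 : n = (n - p) + p := by omega
        have h2 : a n = a (n - p) := by nth_rewrite 1 [h1]; exact hper _
        have h3 : n % p = (n - p) % p := by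
          nth_rewrite 1 [h1]; rw [Nat.add_mod_right]
        rw [h2, ih (n - p) (by omega), ← h3]
  have hpne : (Finset.range p).Nonempty := ⟨0, Finset.mem_range.mpr hp⟩
  set M := (Finset.range p).sup' hpne a with hMdef
  have hub : ∀ n, a n ≤ M := by
    intro n
    rw [hmod n]
    exact Finset.le_sup' a (Finset.mem_range.mpr (Nat.mod_lt n hp))
  obtain ⟨k, hkmem, hkM⟩ := Finset.exists_mem_eq_sup' hpne a
  rcases le_or_gt M 0 with hM0 | hM1
  · -- all terms ≤ 0; sum argument forces all zero
    have hshift : ∀ (b : ℕ → ℝ), b p = b 0 →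
        (∑ i ∈ Finset.range p, b (i+1)) = ∑ i ∈ Finset.range p, b i := by
      intro b hb
      have h1 := Finset.sum_range_succ b p
      have h2 := Finset.sum_range_succ' b p
      rw [h1] at h2
      linarith
    have hap : a p = a 0 := by simpa using hper 0
    have hap1 : a (p + 1) = a 1 := by
      have := hper 1
      rwa [show 1 + p = p + 1 from by omega] at this
    have e1 : (∑ i ∈ Finset.range p, ((a (i+1):ℝ))) = ∑ i ∈ Finset.range p, (a i : ℝ) := by
      have := hshift (fun i => (a i : ℝ)) (by exact_mod_cast congrArg (Int.cast (R := ℝ)) hap)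
      simpa using this
    have e2 : (∑ i ∈ Finset.range p, ((a (i+2):ℝ))) = ∑ i ∈ Finset.range p, ((a (i+1) : ℝ)) := by
      have := hshift (fun i => (a (i+1) : ℝ)) (by exact_mod_cast congrArg (Int.cast (R := ℝ)) hap1)
      simpa [Nat.add_assoc] using this
    have expand : (∑ i ∈ Finset.range p, (r₀ * a i + r₁ * a (i+1) + (a (i+2):ℝ)))
        = (r₀ + r₁ + 1) * ∑ i ∈ Finset.range p, (a i : ℝ) := by
      rw [Finset.sum_add_distrib, Finset.sum_add_distrib, ← Finset.mul_sum, ← Finset.mul_sum,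
        e1, e2, e1]
      ring
    have htot : (0:ℝ) ≤ (r₀ + r₁ + 1) * ∑ i ∈ Finset.range p, (a i : ℝ) := by
      rw [← expand]
      exact Finset.sum_nonneg fun i _ => hεlo i
    have hSnn : (0:ℝ) ≤ ∑ i ∈ Finset.range p, (a i : ℝ) := by
      by_contra hS
      push_neg at hS
      nlinarith
    have hall : ∀ i ∈ Finset.range p, (a i : ℝ) = 0 := by
      rw [← Finset.sum_eq_zero_iff_of_nonpos
        (fun i _ => by exact_mod_cast (hub i).trans hM0 : ∀ i ∈ Finset.range p, (a i:ℝ) ≤ 0)]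
      have hSnp : (∑ i ∈ Finset.range p, (a i : ℝ)) ≤ 0 :=
        Finset.sum_nonpos fun i _ => by exact_mod_cast (hub i).trans hM0
      linarith
    have : a n₀ = 0 := by
      have := hall (n₀ % p) (Finset.mem_range.mpr (Nat.mod_lt n₀ hp))
      rw [hmod n₀]
      exact_mod_cast this
    exact hn₀ this
  · -- M ≥ 1 : blow-up
    have hM1' : (1:ℤ) ≤ M := hM1
    obtain ⟨j, hj⟩ : ∃ j, k + 2*p = j + 2 := ⟨k + 2*p - 2, by omega⟩
    have hjM : a (j+2) = M := by
      have h2p : a (k + 2*p) = a k := by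
        rw [show k + 2*p = k + p + p from by ring, hper, hper]
      rw [← hj, h2p, ← hkM]
    have hMr : (1:ℝ) ≤ (M:ℝ) := by exact_mod_cast hM1'
    -- predecessor of the maximum is at most M - 1
    have hx : a (j+1) ≤ M - 1 := by
      have h := hεhi j
      rw [show (a (j+2) : ℝ) = (M:ℝ) from by exact_mod_cast hjM] at h
      have haj : (a j : ℝ) ≤ M := by exact_mod_cast hub j
      have u1 : r₀ * (M:ℝ) ≤ r₀ * (a j : ℝ) := mul_le_mul_of_nonpos_left haj h₁.le
      have u2 : (0:ℝ) ≤ (r₀ + r₁) * (M:ℝ) := mul_nonneg h₀ (by linarith)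
      have hlt : (a (j+1) : ℝ) < M := by
        by_contra hcon
        push_neg at hcon
        have u3 : r₁ * (M:ℝ) ≤ r₁ * (a (j+1) : ℝ) :=
          mul_le_mul_of_nonneg_left hcon (by linarith)
        nlinarith
      have : a (j+1) < M := by exact_mod_cast hlt
      omega
    -- the term after the maximum is negative
    have h3 : a (j+3) ≤ -1 := by
      have h := hεhi (j+1)
      rw [show j+1+1 = j+2 from by omega, show j+1+2 = j+3 from by omega,
        show (a (j+2) : ℝ) = (M:ℝ) from by exact_mod_cast hjM] at h
      have hlt : (a (j+3) : ℝ) < 0 := by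
        rcases le_or_gt 0 (a (j+1)) with hc | hc
        · have hcr : (0:ℝ) ≤ (a (j+1) : ℝ) := by exact_mod_cast hc
          have hxr : (a (j+1) : ℝ) ≤ (M:ℝ) - 1 := by
            have : ((a (j+1) : ℤ) : ℝ) ≤ ((M - 1 : ℤ) : ℝ) := by exact_mod_cast hx
            push_cast at this
            linarith
          have v1 : (0:ℝ) ≤ (r₀ + r₁) * (a (j+1) : ℝ) := mul_nonneg h₀ hcr
          have v2 : r₁ * (a (j+1) : ℝ) ≤ r₁ * ((M:ℝ) - 1) :=
            mul_le_mul_of_nonneg_left hxr (by linarith)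
          nlinarith
        · have hcr : (a (j+1) : ℝ) < 0 := by exact_mod_cast hc
          have w1 : (0:ℝ) < r₀ * (a (j+1) : ℝ) := mul_pos_of_neg_of_neg h₁ hcr
          have w2 : r₁ * (1:ℝ) ≤ r₁ * (M:ℝ) := mul_le_mul_of_nonneg_left hMr (by linarith)
          nlinarith
      have : a (j+3) < 0 := by exact_mod_cast hlt
      omega
    -- alternating blow-up invariant
    have inv : ∀ m : ℕ, (1 + (m:ℤ) ≤ a (j+2+2*m)) ∧ (a (j+3+2*m) ≤ -(1 + (m:ℤ))) := by
      intro m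
      induction m with
      | zero =>
        constructor
        · rw [show j+2+2*0 = j+2 from by omega, hjM]; omega
        · rw [show j+3+2*0 = j+3 from by omega]; push_cast; omega
      | succ m ih =>
        obtain ⟨ih1, ih2⟩ := ih
        have hA : (1 + (m:ℝ)) ≤ (a (j+2+2*m) : ℝ) := by exact_mod_cast ih1
        have hB : (a (j+3+2*m) : ℝ) ≤ -(1 + (m:ℝ)) := by exact_mod_cast ih2
        have hlo := hεlo (j+2+2*m)
        rw [show j+2+2*m+1 = j+3+2*m from by omega,
          show j+2+2*m+2 = j+2+2*(m+1) from by omega] at hlo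
        have f1 : r₀ * (a (j+2+2*m) : ℝ) ≤ r₀ * (1 + (m:ℝ)) :=
          mul_le_mul_of_nonpos_left hA h₁.le
        have f2 : r₁ * (a (j+3+2*m) : ℝ) ≤ r₁ * (-(1 + (m:ℝ))) :=
          mul_le_mul_of_nonneg_left hB (by linarith)
        have f3 : r₀ * (1 + (m:ℝ)) < 0 :=
          mul_neg_of_neg_of_pos h₁ (by positivity)
        have f4 : (1:ℝ) * (1 + (m:ℝ)) ≤ r₁ * (1 + (m:ℝ)) :=
          mul_le_mul_of_nonneg_right h₂ (by positivity)
        have st1r : (1 + (m:ℝ)) < (a (j+2+2*(m+1)) : ℝ) := by nlinarith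
        have st1 : 1 + ((m:ℤ)+1) ≤ a (j+2+2*(m+1)) := by
          have : (1 + (m:ℤ)) < a (j+2+2*(m+1)) := by exact_mod_cast st1r
          omega
        have hC : (2 + (m:ℝ)) ≤ (a (j+2+2*(m+1)) : ℝ) := by
          have : ((1 + ((m:ℤ)+1) : ℤ) : ℝ) ≤ ((a (j+2+2*(m+1)) : ℤ) : ℝ) := by
            exact_mod_cast st1
          push_cast at this
          linarith
        have hhi := hεhi (j+3+2*m)
        rw [show j+3+2*m+1 = j+2+2*(m+1) from by omega,
          show j+3+2*m+2 = j+3+2*(m+1) from by omega] at hhi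
        have g1 : r₀ * (-(1 + (m:ℝ))) ≤ r₀ * (a (j+3+2*m) : ℝ) :=
          mul_le_mul_of_nonpos_left hB h₁.le
        have g2 : (0:ℝ) < r₀ * (-(1 + (m:ℝ))) :=
          mul_pos_of_neg_of_neg h₁ (by linarith [Nat.cast_nonneg (α := ℝ) m])
        have g3 : r₁ * (2 + (m:ℝ)) ≤ r₁ * (a (j+2+2*(m+1)) : ℝ) :=
          mul_le_mul_of_nonneg_left hC (by linarith)
        have g4 : (1:ℝ) * (2 + (m:ℝ)) ≤ r₁ * (2 + (m:ℝ)) :=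
          mul_le_mul_of_nonneg_right h₂ (by positivity)
        have st2r : (a (j+3+2*(m+1)) : ℝ) < -(1 + (m:ℝ)) := by nlinarith
        have st2 : a (j+3+2*(m+1)) ≤ -(1 + ((m:ℤ)+1)) := by
          have : (a (j+3+2*(m+1)) : ℤ) < -(1 + (m:ℤ)) := by exact_mod_cast st2r
          omega
        constructor
        · have : ((m:ℤ) + 1) = ((m+1 : ℕ) : ℤ) := by push_cast; ring
          rw [← this]; exact st1
        · have : ((m:ℤ) + 1) = ((m+1 : ℕ) : ℤ) := by push_cast; ring
          rw [← this]; exact st2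
    have hgrow := (inv M.toNat).1
    have hbd := hub (j+2+2*M.toNat)
    omega
end

section
/- Let r₀, r₁ ∈ ℝ with r₀ - r₁ < -1 and r₀ ≥ 0, and define τ(a₁,a₂) = (a₂, -⌊r₀a₁ + r₁a₂⌋). Let S₁ = {(a₁,a₂) ∈ ℤ² : a₁ ≥ 0, a₂ ≤ -a₁} \ {(0,0)} and S₂ = {(a₁,a₂) ∈ ℤ² : a₁ ≤ 0, a₂ ≥ -a₁} \ {(0,0)}. Then τ(S₁) ⊆ S₂ and τ(S₂) ⊆ S₁. -/
theorem stmt_16 (r₀ r₁ : ℝ) (h₀ : r₀ - r₁ < -1) (h₁ : 0 ≤ r₀)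
    (τ : ℤ × ℤ → ℤ × ℤ)
    (hτ : ∀ x : ℤ × ℤ, τ x = (x.2, -⌊r₀ * x.1 + r₁ * x.2⌋))
    (S₁ S₂ : Set (ℤ × ℤ))
    (hS₁ : S₁ = {x : ℤ × ℤ | x.1 ≥ 0 ∧ x.2 ≤ -x.1} \ {(0, 0)})
    (hS₂ : S₂ = {x : ℤ × ℤ | x.1 ≤ 0 ∧ x.2 ≥ -x.1} \ {(0, 0)}) :
    τ '' S₁ ⊆ S₂ ∧ τ '' S₂ ⊆ S₁ := by
  subst hS₁ hS₂
  constructor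
  · rintro y ⟨⟨a, b⟩, ⟨⟨ha, hb⟩, hne⟩, rfl⟩
    simp only [Set.mem_setOf_eq] at ha hb
    rw [hτ]
    have hb0 : b ≤ 0 := le_trans hb (by linarith)
    have hbne : b ≠ 0 := by
      rintro rfl
      apply hne; have : a = 0 := by omega
      subst this; rfl
    have hflr : ⌊r₀ * (a : ℝ) + r₁ * b⌋ ≤ b := by
      have hreal : r₀ * (a : ℝ) + r₁ * b ≤ (b : ℝ) := by
        have ha' : (0 : ℝ) ≤ (a : ℝ) := by exact_mod_cast ha
        have hb' : (b : ℝ) ≤ -(a : ℝ) := by exact_mod_cast hb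
        have hb0' : (b : ℝ) ≤ 0 := by exact_mod_cast hb0
        nlinarith
      calc ⌊r₀ * (a : ℝ) + r₁ * b⌋ ≤ ⌊(b : ℝ)⌋ := Int.floor_le_floor hreal
        _ = b := Int.floor_intCast b
    refine ⟨⟨by simpa using hb0, by simpa using hflr⟩, ?_⟩
    simp only [Set.mem_singleton_iff, Prod.mk.injEq, not_and]
    intro h; exact absurd h hbne
  · rintro y ⟨⟨a, b⟩, ⟨⟨ha, hb⟩, hne⟩, rfl⟩
    simp only [Set.mem_setOf_eq] at ha hb
    rw [hτ]
    have hb0 : 0 ≤ b := le_trans (by linarith) hb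
    have hbne : b ≠ 0 := by
      rintro rfl
      apply hne; have : a = 0 := by omega
      subst this; rfl
    have hflr : b ≤ ⌊r₀ * (a : ℝ) + r₁ * b⌋ := by
      apply Int.le_floor.mpr
      have ha' : (a : ℝ) ≤ 0 := by exact_mod_cast ha
      have hb' : -(a : ℝ) ≤ (b : ℝ) := by exact_mod_cast hb
      have hb0' : (0 : ℝ) ≤ (b : ℝ) := by exact_mod_cast hb0
      nlinarith
    refine ⟨⟨by simpa using hb0, by simpa using hflr⟩, ?_⟩
    simp only [Set.mem_singleton_iff, Prod.mk.injEq, not_and]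
    intro h; exact absurd h hbne
end

section
/- Let r₀, r₁ ∈ ℝ with r₀ - r₁ < -1 and r₀ ≥ 0, and define τ(a₁,a₂) = (a₂, -⌊r₀a₁ + r₁a₂⌋). Let S₀ = {(0,0)}, S₁ = {(a₁,a₂) ∈ ℤ² : a₁ ≥ 0, a₂ ≤ -a₁} \ S₀, S₂ = {(a₁,a₂) : a₁ ≤ 0, a₂ ≥ -a₁} \ S₀, S₃ = {(a₁,a₂) : a₁ > 0, a₂ ≥ 0}, and S₄ = {(a₁,a₂) : a₁ < 0, a₂ ≤ 0}. Then τ(S₃) ⊆ S₁ ∪ S₀ and τ(S₄) ⊆ S₂ ∪ S₀. -/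
theorem stmt_17 (r₀ r₁ : ℝ) (h₀ : r₀ - r₁ < -1) (h₁ : 0 ≤ r₀)
    (τ : ℤ × ℤ → ℤ × ℤ)
    (hτ : ∀ x : ℤ × ℤ, τ x = (x.2, -⌊r₀ * x.1 + r₁ * x.2⌋))
    (S₀ S₁ S₂ S₃ S₄ : Set (ℤ × ℤ))
    (hS₀ : S₀ = {(0, 0)})
    (hS₁ : S₁ = {x : ℤ × ℤ | x.1 ≥ 0 ∧ x.2 ≤ -x.1} \ S₀)
    (hS₂ : S₂ = {x : ℤ × ℤ | x.1 ≤ 0 ∧ x.2 ≥ -x.1} \ S₀)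
    (hS₃ : S₃ = {x : ℤ × ℤ | x.1 > 0 ∧ x.2 ≥ 0})
    (hS₄ : S₄ = {x : ℤ × ℤ | x.1 < 0 ∧ x.2 ≤ 0}) :
    τ '' S₃ ⊆ S₁ ∪ S₀ ∧ τ '' S₄ ⊆ S₂ ∪ S₀ := by
  have hr₁ : (1 : ℝ) < r₁ := by linarith
  constructor
  · rintro p ⟨x, hx, rfl⟩
    rw [hS₃] at hx
    obtain ⟨h1, h2⟩ := hx
    have ha1 : (1 : ℝ) ≤ (x.1 : ℝ) := by exact_mod_cast h1
    have ha2 : (0 : ℝ) ≤ (x.2 : ℝ) := by exact_mod_cast h2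
    have hfl : x.2 ≤ ⌊r₀ * x.1 + r₁ * x.2⌋ := by
      apply Int.le_floor.mpr
      nlinarith [mul_nonneg h₁ (le_trans zero_le_one ha1)]
    have hmem : τ x ∈ {x : ℤ × ℤ | x.1 ≥ 0 ∧ x.2 ≤ -x.1} := by
      rw [hτ]
      exact ⟨h2, by omega⟩
    by_cases h0 : τ x ∈ S₀
    · exact Or.inr h0
    · exact Or.inl (by rw [hS₁]; exact ⟨hmem, h0⟩)
  · rintro p ⟨x, hx, rfl⟩
    rw [hS₄] at hx
    obtain ⟨h1, h2⟩ := hx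
    have ha1 : (x.1 : ℝ) ≤ -1 := by exact_mod_cast (by omega : x.1 ≤ -1)
    have ha2 : (x.2 : ℝ) ≤ 0 := by exact_mod_cast h2
    have hfl : ⌊r₀ * x.1 + r₁ * x.2⌋ ≤ x.2 := by
      have : ⌊r₀ * x.1 + r₁ * x.2⌋ < x.2 + 1 := by
        apply Int.floor_lt.mpr
        push_cast
        nlinarith
      omega
    have hmem : τ x ∈ {x : ℤ × ℤ | x.1 ≤ 0 ∧ x.2 ≥ -x.1} := by
      rw [hτ]
      exact ⟨h2, by omega⟩
    by_cases h0 : τ x ∈ S₀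
    · exact Or.inr h0
    · exact Or.inl (by rw [hS₂]; exact ⟨hmem, h0⟩)
end

section
/- Let r₀, r₁ ∈ ℝ with r₀ - r₁ < -1 and r₀ ≥ 0. Then the two-dimensional SRS map τ_{(r₀,r₁)}(a₀,a₁) = (a₁, -⌊r₀a₀ + r₁a₁⌋) has no nontrivial cycle; i.e., every ultimately periodic orbit ends up in the trivial cycle (0). -/
theorem stmt_18 (r₀ r₁ : ℝ) (h₀ : r₀ - r₁ < -1) (h₁ : 0 ≤ r₀) :
    ¬ ∃ (a : ℕ → ℤ) (p : ℕ), SRSCycle r₀ r₁ a p ∧ ∃ n, a n ≠ 0 := by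
  rintro ⟨a, p, ⟨hp, hper, hcond⟩, n₀, hn₀⟩
  have hPer : Function.Periodic a p := hper
  have hmod : ∀ n, a n = a (n % p) := fun n => (hPer.map_mod_nat n).symm
  have hSne : (Finset.range p).Nonempty := Finset.nonempty_range_iff.mpr hp.ne'
  set M := (Finset.range p).sup' hSne a with hMdef
  set m := (Finset.range p).inf' hSne a with hmdef
  have hub : ∀ n, a n ≤ M := by
    intro n
    rw [hmod n]
    exact Finset.le_sup' a (Finset.mem_range.mpr (Nat.mod_lt _ hp))
  have hlb : ∀ n, m ≤ a n := by
    intro n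
    rw [hmod n]
    exact Finset.inf'_le a (Finset.mem_range.mpr (Nat.mod_lt _ hp))
  obtain ⟨kM, hkM, hkMe⟩ := Finset.exists_mem_eq_sup' hSne a
  obtain ⟨km, hkm, hkme⟩ := Finset.exists_mem_eq_inf' hSne a
  have haM : a (kM + (p-1) + 1) = M := by
    have h : kM + (p-1) + 1 = kM + p := by omega
    rw [h, hper]; exact hkMe.symm
  have ham : a (km + (p-1) + 1) = m := by
    have h : km + (p-1) + 1 = km + p := by omega
    rw [h, hper]; exact hkme.symm
  by_cases hcase : M ≤ -m
  · -- case 1: min index gives contradiction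
    have hm1 : m ≤ -1 := by
      rcases lt_or_gt_of_ne hn₀ with h | h
      · have := hlb n₀; omega
      · have := hub n₀; omega
    set n := km + (p-1) with hn
    obtain ⟨hc0, hc1⟩ := hcond n
    have hA : (a (n+2) : ℝ) ≤ (M:ℝ) := by exact_mod_cast hub (n+2)
    have hB : (a n : ℝ) ≤ (M:ℝ) := by exact_mod_cast hub n
    have hMm : (M:ℝ) ≤ -(m:ℝ) := by exact_mod_cast hcase
    have hm1' : (m:ℝ) ≤ -1 := by exact_mod_cast hm1
    rw [ham] at hc0
    nlinarith [mul_nonneg h₁ (sub_nonneg.mpr hB), mul_nonneg h₁ (sub_nonneg.mpr hMm),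
      mul_pos (by linarith : (0:ℝ) < -(r₀ - r₁ + 1)) (by linarith : (0:ℝ) < -(m:ℝ))]
  · -- case 2: max index gives contradiction
    push_neg at hcase
    have hM1 : 1 ≤ M := by
      rcases lt_or_gt_of_ne hn₀ with h | h
      · have := hlb n₀; omega
      · have := hub n₀; omega
    have hmge : 1 - M ≤ m := by omega
    set n := kM + (p-1) with hn
    obtain ⟨hc0, hc1⟩ := hcond n
    have hA : (m : ℝ) ≤ (a (n+2) : ℝ) := by exact_mod_cast hlb (n+2)
    have hB : (m : ℝ) ≤ (a n : ℝ) := by exact_mod_cast hlb n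
    have hM1' : (1:ℝ) ≤ (M:ℝ) := by exact_mod_cast hM1
    have hmge' : (1:ℝ) - (M:ℝ) ≤ (m:ℝ) := by exact_mod_cast hmge
    rw [haM] at hc1
    nlinarith [mul_nonneg h₁ (sub_nonneg.mpr hB),
      mul_pos (by linarith : (0:ℝ) < r₁ - r₀ - 1) (by linarith : (0:ℝ) < (M:ℝ))]
end

section
/- Let r₀, r₁ ∈ ℝ with -1 < r₀ - r₁ ≤ -1/2, r₁ ≥ 1 + √5, and r₁² ≥ 4r₀. Then the two-dimensional SRS map τ_{(r₀,r₁)} has no nontrivial cycle. -/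
set_option maxHeartbeats 1000000 in
theorem stmt_19 (r₀ r₁ : ℝ) (h₀ : -1 < r₀ - r₁) (h₁ : r₀ - r₁ ≤ -(1/2)) (h₂ : 1 + Real.sqrt 5 ≤ r₁) (h₃ : 4 * r₀ ≤ r₁ ^ 2) :
    ¬ ∃ (a : ℕ → ℤ) (p : ℕ), SRSCycle r₀ r₁ a p ∧ ∃ n, a n ≠ 0 := by
  rintro ⟨a, p, ⟨hp, hper, hbox⟩, n₀, hn₀⟩
  have he0 : ∀ n, (0:ℝ) ≤ r₀ * a n + r₁ * a (n + 1) + (a (n + 2) : ℝ) :=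
    fun n => (Set.mem_Ico.mp (hbox n)).1
  have he1 : ∀ n, r₀ * a n + r₁ * a (n + 1) + (a (n + 2) : ℝ) < 1 :=
    fun n => (Set.mem_Ico.mp (hbox n)).2
  have h5 : (2:ℝ) ≤ Real.sqrt 5 := by
    nlinarith [Real.sq_sqrt (show (0:ℝ) ≤ 5 by norm_num), Real.sqrt_nonneg 5]
  have hr₁ : (3:ℝ) ≤ r₁ := by linarith
  have hD : (0:ℝ) ≤ r₁^2 - 4*r₀ := by linarith
  set s : ℝ := Real.sqrt (r₁^2 - 4*r₀) with hsdef
  have hs2 : s^2 = r₁^2 - 4*r₀ := Real.sq_sqrt hD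
  have hs0 : (0:ℝ) ≤ s := Real.sqrt_nonneg _
  set α : ℝ := (-r₁ + s)/2 with hαdef
  set β : ℝ := (-r₁ - s)/2 with hβdef
  have hsum : α + β = -r₁ := by rw [hαdef, hβdef]; ring
  have hmul : α * β = r₀ := by rw [hαdef, hβdef]; linear_combination (-1/4 : ℝ) * hs2
  have hβle : β ≤ -((1 + Real.sqrt 5)/2) := by rw [hβdef]; linarith
  have hβneg : β < 0 := by nlinarith
  have hβφ : 1 ≤ β^2 + β := by
    nlinarith [sq_nonneg (β + (1 + Real.sqrt 5)/2),
      mul_nonneg (show (0:ℝ) ≤ Real.sqrt 5 by linarith)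
        (show (0:ℝ) ≤ -β - (1 + Real.sqrt 5)/2 by linarith),
      Real.sq_sqrt (show (0:ℝ) ≤ 5 by norm_num)]
  have hβsq : (2:ℝ) ≤ β^2 := by nlinarith
  have hαlt : α < -1 := by
    have hslt : s < r₁ - 2 := by nlinarith
    rw [hαdef]; linarith
  -- the linear form b
  set b : ℕ → ℝ := fun n => (a (n+1) : ℝ) - α * (a n : ℝ) with hbdef
  have hbval : ∀ n, b n = (a (n+1) : ℝ) - α * (a n : ℝ) := fun n => by rw [hbdef]
  have hbrec : ∀ n, b (n+1) = β * b n + (r₀ * a n + r₁ * a (n + 1) + (a (n + 2) : ℝ)) := by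
    intro n
    rw [hbval, hbval]
    linear_combination (-(a (n+1) : ℝ)) * hsum + (a n : ℝ) * hmul
  have hbper : ∀ n, b (n + p) = b n := by
    intro n
    rw [hbval, hbval, show n + p + 1 = n + 1 + p by ring, hper, hper]
  have modlem : ∀ f : ℕ → ℝ, (∀ n, f (n + p) = f n) → ∀ n, f (n % p) = f n := by
    intro f hf n
    have key : ∀ m k, f (k + m * p) = f k := by
      intro m
      induction m with
      | zero => simp
      | succ m ih => intro k; rw [show k + (m+1)*p = (k + m*p) + p by ring, hf, ih]
    have := key (n / p) (n % p)
    rw [Nat.mod_add_div'] at this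
    exact this.symm
  have hbmod := modlem b hbper
  -- maximum of b over one period
  obtain ⟨k, _, hkmax⟩ := Finset.exists_max_image (Finset.range p) b ⟨0, Finset.mem_range.2 hp⟩
  have hM : ∀ n, b n ≤ b k := fun n => by
    rw [← hbmod n]; exact hkmax _ (Finset.mem_range.2 (Nat.mod_lt _ hp))
  obtain ⟨l, _, hlmin⟩ := Finset.exists_min_image (Finset.range p) b ⟨0, Finset.mem_range.2 hp⟩
  have hm : ∀ n, b l ≤ b n := fun n => by
    rw [← hbmod n]; exact hlmin _ (Finset.mem_range.2 (Nat.mod_lt _ hp))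
  -- upper bound b < 1
  have hub : ∀ n, b n < 1 := by
    have h1 : b (k+1) < β * b k + 1 := by rw [hbrec k]; linarith [he1 k]
    have h2 : β * (β * b k + 1) < β * b (k+1) := mul_lt_mul_of_neg_left h1 hβneg
    have h3 : β * b (k+1) ≤ b (k+2) := by rw [hbrec (k+1)]; linarith [he0 (k+1)]
    have h4 : b (k+2) ≤ b k := hM _
    have hkey : β^2 * b k + β < b k := by
      calc β^2 * b k + β = β * (β * b k + 1) := by ring
        _ < β * b (k+1) := h2
        _ ≤ b (k+2) := h3
        _ ≤ b k := h4
    have : b k < 1 := by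
      by_contra hc
      push_neg at hc
      nlinarith [mul_nonneg (show (0:ℝ) ≤ β^2 - 1 by nlinarith) (show (0:ℝ) ≤ b k - 1 by linarith)]
    exact fun n => lt_of_le_of_lt (hM n) this
  -- lower bound -1 < b
  have hlb : ∀ n, -1 < b n := by
    have h1 : β * b l ≤ b (l+1) := by rw [hbrec l]; linarith [he0 l]
    have h2 : β * b (l+1) ≤ β * (β * b l) := mul_le_mul_of_nonpos_left h1 (le_of_lt hβneg)
    have h3 : b (l+2) < β * b (l+1) + 1 := by rw [hbrec (l+1)]; linarith [he1 (l+1)]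
    have h4 : b l ≤ b (l+2) := hm _
    have hkey : b l < β^2 * b l + 1 := by
      calc b l ≤ b (l+2) := h4
        _ < β * b (l+1) + 1 := h3
        _ ≤ β * (β * b l) + 1 := by linarith
        _ = β^2 * b l + 1 := by ring
    have : -1 < b l := by
      by_contra hc
      push_neg at hc
      nlinarith [mul_nonneg (show (0:ℝ) ≤ β^2 - 1 by nlinarith) (show (0:ℝ) ≤ -1 - b l by linarith)]
    exact fun n => lt_of_lt_of_le this (hm n)
  -- integer step lemma
  have hstep : ∀ n, (1 ≤ a n → a (n+1) ≤ -a n) ∧ (a n ≤ -1 → -a n ≤ a (n+1)) := by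
    intro n
    have hb1 := hub n
    have hb2 := hlb n
    rw [hbval n] at hb1 hb2
    constructor
    · intro h
      have hc : (1:ℝ) ≤ (a n : ℝ) := by exact_mod_cast h
      have hprod : α * (a n : ℝ) ≤ -1 * (a n : ℝ) :=
        mul_le_mul_of_nonneg_right (le_of_lt hαlt) (by linarith)
      have h2 : ((a (n+1) : ℤ) : ℝ) < ((-a n + 1 : ℤ) : ℝ) := by push_cast; linarith
      have h3 : a (n+1) < -a n + 1 := by exact_mod_cast h2
      omega
    · intro h
      have hc : (a n : ℝ) ≤ -1 := by exact_mod_cast h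
      have hprod : -1 * (a n : ℝ) ≤ α * (a n : ℝ) :=
        mul_le_mul_of_nonpos_right (le_of_lt hαlt) (by linarith)
      have h2 : ((-a n - 1 : ℤ) : ℝ) < ((a (n+1) : ℤ) : ℝ) := by push_cast; linarith
      have h3 : -a n - 1 < a (n+1) := by exact_mod_cast h2
      omega
  -- nonvanishing propagates
  have hchain : ∀ j, a (n₀ + j) ≠ 0 := by
    intro j
    induction j with
    | zero => simpa using hn₀
    | succ j ih =>
      rcases lt_or_gt_of_ne ih with h | h
      · have := (hstep (n₀ + j)).2 (by omega)
        rw [show n₀ + (j+1) = n₀ + j + 1 by ring]; omega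
      · have := (hstep (n₀ + j)).1 (by omega)
        rw [show n₀ + (j+1) = n₀ + j + 1 by ring]; omega
  have hmono : ∀ j, (a (n₀ + j)).natAbs ≤ (a (n₀ + j + 1)).natAbs := by
    intro j
    rcases lt_or_gt_of_ne (hchain j) with h | h
    · have := (hstep (n₀ + j)).2 (by omega); omega
    · have := (hstep (n₀ + j)).1 (by omega); omega
  have hfm : Monotone (fun j => (a (n₀ + j)).natAbs) :=
    monotone_nat_of_le_succ hmono
  have akey : ∀ m n, a (n + m * p) = a n := by
    intro m
    induction m with
    | zero => simp
    | succ m ih => intro n; rw [show n + (m+1)*p = (n + m*p) + p by ring, hper, ih]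
  have hconst : ∀ j, (a (n₀ + j)).natAbs = (a n₀).natAbs := by
    intro j
    have h1 : (a (n₀ + j)).natAbs ≤ (a (n₀ + j * p)).natAbs := by
      have := hfm (show j ≤ j * p from Nat.le_mul_of_pos_right j hp)
      simpa using this
    have h2 : a (n₀ + j * p) = a n₀ := akey j n₀
    have h3 : (a n₀).natAbs ≤ (a (n₀ + j)).natAbs := by
      have := hfm (Nat.zero_le j)
      simpa using this
    omega
  have halt : ∀ j, a (n₀ + j + 1) = -a (n₀ + j) := by
    intro j
    have hc1 := hconst j
    have hc2 := hconst (j + 1)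
    rw [show n₀ + (j+1) = n₀ + j + 1 by ring] at hc2
    rcases lt_or_gt_of_ne (hchain j) with h | h
    · have := (hstep (n₀ + j)).2 (by omega); omega
    · have := (hstep (n₀ + j)).1 (by omega); omega
  -- final contradiction using the box at n₀ and n₀+1
  have ha1 : a (n₀ + 1) = -a n₀ := by simpa using halt 0
  have ha2 : a (n₀ + 2) = a n₀ := by
    have := halt 1
    rw [show n₀ + 1 + 1 = n₀ + 2 by ring] at this
    rw [this, ha1]; ring
  have ha3 : a (n₀ + 3) = -a n₀ := by
    have := halt 2
    rw [show n₀ + 2 + 1 = n₀ + 3 by ring] at this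
    rw [this, ha2]
  have e0 := he0 n₀
  have e1' := he0 (n₀ + 1)
  rw [show n₀ + 1 + 1 = n₀ + 2 by ring, show n₀ + 1 + 2 = n₀ + 3 by ring] at e1'
  rw [ha1, ha2] at e0
  rw [ha1, ha2, ha3] at e1'
  push_cast at e0 e1'
  have ht : (0:ℝ) < r₀ - r₁ + 1 := by linarith
  have hA : ((a n₀ : ℤ) : ℝ) ≠ 0 := Int.cast_ne_zero.mpr hn₀
  rcases hA.lt_or_gt with h | h
  · nlinarith
  · nlinarith
end
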